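/- arXiv:2203.11895 — 4 statements merged into one kernel-verified Lean document; each statement's English description precedes it below -/
import Mathlib

section
/- Let S_Z be an orbital fuzzy iterated function system and u ∈ F*_S. Then the pointwise supremum ∨_{x∈[u]^*} u_x is attained pointwise as a maximum: for every y ∈ X there exists x ∈ [u]^* with u_x(y) = sup_{z∈[u]^*} u_z(y). -/
open Metric Filter Topology Set

/-- The orbit of a point `x` under the family of maps `f i`:
`x` together with all images of `x` under finite compositions of the `f i`. -/
def orbitIFS {X I : Type*} (f : I → X → X) (x : X) : Set X :=
  ⋃ l : List I, {l.foldr (fun i y => f i y) x}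

/-- The fractal (Hutchinson–Barnsley) operator `K ↦ ⋃ i, f i '' K`. -/
def fractalOp {X I : Type*} (f : I → X → X) (K : Set X) : Set X :=
  ⋃ i, f i '' K

/-- Image of a fuzzy set under a map: `f(u)(y) = sup_{x ∈ f⁻¹ y} u x` (0 if empty). -/
noncomputable def fuzzyImage {X : Type*} (g : X → X) (u : X → ℝ) : X → ℝ :=
  fun y => sSup (u '' (g ⁻¹' {y}))

/-- The fuzzy Hutchinson–Barnsley operator `Z(u) = ∨ i, ρ i (f i (u))`. -/
noncomputable def Zop {X I : Type*} (f : I → X → X) (ρ : I → ℝ → ℝ) (u : X → ℝ) : X → ℝ :=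
  fun y => ⨆ i, ρ i (fuzzyImage (f i) u y)

/-- The metric `d_∞(u,v) = sup_{α ∈ (0,1]} h([u]^α, [v]^α)`. -/
noncomputable def dInfty {X : Type*} [MetricSpace X] (u v : X → ℝ) : ℝ :=
  ⨆ α : Ioc (0:ℝ) 1, hausdorffDist {x | (α:ℝ) ≤ u x} {x | (α:ℝ) ≤ v x}

/-- The support of a fuzzy set: the closure of `{x | 0 < u x}`. -/
def fsupp {X : Type*} [MetricSpace X] (u : X → ℝ) : Set X := closure {x | 0 < u x}

/-- The crisp fuzzy point `δ_s`. -/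
def fdelta {X : Type*} [DecidableEq X] (s : X) : X → ℝ := fun t => if t = s then 1 else 0

/-- `u^x` : the restriction of `u` to the closure of the orbit of `w` (zero outside). -/
noncomputable def restrictO {X I : Type*} [MetricSpace X] (f : I → X → X) (u : X → ℝ)
    (w : X) : X → ℝ :=
  (closure (orbitIFS f w)).indicator u

/-- A normal compactly supported fuzzy set (with values in `[0,1]`). -/
def IsFuzzyN {X : Type*} [MetricSpace X] (u : X → ℝ) : Prop :=
  (∀ x, u x ∈ Icc (0:ℝ) 1) ∧ (∃ x, u x = 1) ∧ IsCompact (fsupp u)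

/-- An upper semicontinuous normal compactly supported fuzzy set: membership in `F*_X`. -/
def IsFuzzyStar {X : Type*} [MetricSpace X] (u : X → ℝ) : Prop :=
  IsFuzzyN u ∧ UpperSemicontinuous u

/-- Membership in `F*_S`: for each point of positive membership there is an orbit
containing it together with a point of membership one. -/
def InFS {X I : Type*} [MetricSpace X] (f : I → X → X) (u : X → ℝ) : Prop :=
  IsFuzzyStar u ∧ ∀ x, 0 < u x → ∃ w y, x ∈ orbitIFS f w ∧ y ∈ orbitIFS f w ∧ u y = 1

/-- The orbital contraction condition. -/
def OrbitalContr {X I : Type*} [MetricSpace X] (f : I → X → X) (C : ℝ) : Prop :=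
  ∀ i x, ∀ y ∈ orbitIFS f x, ∀ z ∈ orbitIFS f x, dist (f i y) (f i z) ≤ C * dist y z

/-- An admissible system of grey level maps. -/
def Admissible {I : Type*} (ρ : I → ℝ → ℝ) : Prop :=
  (∀ i, ρ i 0 = 0) ∧ (∀ i, MonotoneOn (ρ i) (Icc (0:ℝ) 1)) ∧
  (∀ i, ∀ t ∈ Icc (0:ℝ) 1, ContinuousWithinAt (ρ i) (Ici t) t) ∧
  (∀ i, ∀ t ∈ Icc (0:ℝ) 1, ρ i t ∈ Icc (0:ℝ) 1) ∧ (∃ j, ρ j 1 = 1)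

/-!
For `α ∈ (0,1]` the `α`-cut of `Zⁿ(δ_x)` is the finite set of points `w(x)`, `w` a word of
length `n` whose grey level is at least `α`. So if `y` lies in the closure of the orbit of `x`,
the `α`-cuts of `Zⁿ(δ_x)` and `Zⁿ(δ_y)` are images of the same set of words, and orbital
contraction puts them within `Cⁿ · diam (orbit x)` of each other. Every point of `[u_x]^*` lies
in that closure, so if `u_x(y) > 0` and `u_{x'}(y) > 0`, the `α`-cuts of `u_x` and `u_{x'}` are
Hausdorff limits of the same sequence, the `α`-cuts of `Zⁿ(δ_y)`. Being closed, they coincide,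
hence `u_x = u_{x'}`: all positive values `u_x(y)` agree and the supremum is attained.
-/

section Words

variable {X I : Type*}

def wordMap (f : I → X → X) (w : List I) (x : X) : X :=
  w.foldr (fun i y => f i y) x

def wordGrey (ρ : I → ℝ → ℝ) (w : List I) : ℝ :=
  w.foldr (fun i t => ρ i t) 1

variable {f : I → X → X}

@[simp] lemma wordMap_nil (x : X) : wordMap f [] x = x := rfl

@[simp] lemma wordMap_cons (i : I) (w : List I) (x : X) :
    wordMap f (i :: w) x = f i (wordMap f w x) := rfl

lemma wordMap_append (w v : List I) (x : X) :
    wordMap f (w ++ v) x = wordMap f w (wordMap f v x) :=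
  List.foldr_append ..

@[simp] lemma wordGrey_nil (ρ : I → ℝ → ℝ) : wordGrey ρ [] = 1 := rfl

@[simp] lemma wordGrey_cons (ρ : I → ℝ → ℝ) (i : I) (w : List I) :
    wordGrey ρ (i :: w) = ρ i (wordGrey ρ w) := rfl

lemma orbitIFS_eq_range (f : I → X → X) (x : X) : orbitIFS f x = range (wordMap f · x) :=
  iUnion_singleton_eq_range _

lemma wordMap_mem_orbitIFS (w : List I) (x : X) : wordMap f w x ∈ orbitIFS f x := by
  rw [orbitIFS_eq_range]
  exact mem_range_self w

lemma self_mem_orbitIFS (x : X) : x ∈ orbitIFS f x :=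
  wordMap_mem_orbitIFS [] x

lemma wordMap_mem_orbitIFS_of_mem {a x : X} (ha : a ∈ orbitIFS f x) (w : List I) :
    wordMap f w a ∈ orbitIFS f x := by
  rw [orbitIFS_eq_range] at ha ⊢
  obtain ⟨v, rfl⟩ := ha
  exact ⟨w ++ v, wordMap_append w v x⟩

lemma continuous_wordMap [TopologicalSpace X] (hf : ∀ i, Continuous (f i)) (w : List I) :
    Continuous (wordMap f w) := by
  induction w with
  | nil => exact continuous_id
  | cons i w ih => exact (hf i).comp ih

end Words

section Admissible

variable {I : Type*} {ρ : I → ℝ → ℝ}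

lemma Admissible.nonempty (hρ : Admissible ρ) : Nonempty I :=
  let ⟨j, _⟩ := hρ.2.2.2.2
  ⟨j⟩

lemma Admissible.pos_of_le_apply (hρ : Admissible ρ) {i : I} {t α : ℝ} (ht : 0 ≤ t)
    (hα : 0 < α) (h : α ≤ ρ i t) : 0 < t := by
  refine ht.lt_of_ne ?_
  rintro rfl
  rw [hρ.1 i] at h
  exact h.not_gt hα

lemma Admissible.wordGrey_mem_Icc (hρ : Admissible ρ) (w : List I) :
    wordGrey ρ w ∈ Icc (0 : ℝ) 1 := by
  induction w with
  | nil => simp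
  | cons i w ih => exact hρ.2.2.2.1 i _ ih

lemma Admissible.exists_wordGrey_eq_one (hρ : Admissible ρ) (n : ℕ) :
    ∃ w : List I, w.length = n ∧ wordGrey ρ w = 1 := by
  obtain ⟨j, hj⟩ := hρ.2.2.2.2
  refine ⟨List.replicate n j, List.length_replicate, ?_⟩
  induction n with
  | zero => rfl
  | succ n ih => rw [List.replicate_succ, wordGrey_cons, ih, hj]

end Admissible

section Zop

variable {X I : Type*}

def IsSimpleFuzzy (v : X → ℝ) : Prop :=
  (∀ x, v x ∈ Icc (0 : ℝ) 1) ∧ (range v).Finite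

lemma isSimpleFuzzy_fdelta [DecidableEq X] (s : X) : IsSimpleFuzzy (fdelta s) := by
  refine ⟨fun t => ?_, ((finite_singleton (1 : ℝ)).insert 0).subset ?_⟩
  · unfold fdelta
    split_ifs <;> simp
  · rintro _ ⟨t, rfl⟩
    unfold fdelta
    split_ifs <;> simp

lemma fuzzyImage_mem_Icc (g : X → X) {v : X → ℝ} (hv : ∀ x, v x ∈ Icc (0 : ℝ) 1) (y : X) :
    fuzzyImage g v y ∈ Icc (0 : ℝ) 1 :=
  ⟨Real.sSup_nonneg (by rintro _ ⟨x, -, rfl⟩; exact (hv x).1),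
    Real.sSup_le (by rintro _ ⟨x, -, rfl⟩; exact (hv x).2) zero_le_one⟩

lemma le_fuzzyImage {g : X → X} {v : X → ℝ} (hv : BddAbove (range v)) {x y : X} (h : g x = y) :
    v x ≤ fuzzyImage g v y :=
  le_csSup (hv.mono (image_subset_range _ _)) ⟨x, h, rfl⟩

lemma fuzzyImage_eq_zero_or_exists {g : X → X} {v : X → ℝ} (hv : (range v).Finite) (y : X) :
    fuzzyImage g v y = 0 ∨ ∃ x, g x = y ∧ v x = fuzzyImage g v y := by
  rcases (v '' (g ⁻¹' {y})).eq_empty_or_nonempty with h | h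
  · left
    simp only [fuzzyImage, h, Real.sSup_empty]
  · obtain ⟨x, hx, hvx⟩ := h.csSup_mem (hv.subset (image_subset_range _ _))
    exact Or.inr ⟨x, hx, hvx⟩

variable {f : I → X → X} {ρ : I → ℝ → ℝ}

lemma Zop_mem_Icc (hρ : Admissible ρ) {v : X → ℝ} (hv : ∀ x, v x ∈ Icc (0 : ℝ) 1) (y : X) :
    Zop f ρ v y ∈ Icc (0 : ℝ) 1 :=
  have h i := hρ.2.2.2.1 i _ (fuzzyImage_mem_Icc (f i) hv y)
  ⟨Real.iSup_nonneg fun i => (h i).1, Real.iSup_le (fun i => (h i).2) zero_le_one⟩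

variable [Finite I]

lemma apply_fuzzyImage_le_Zop (v : X → ℝ) (y : X) (i : I) :
    ρ i (fuzzyImage (f i) v y) ≤ Zop f ρ v y :=
  le_ciSup (f := fun i => ρ i (fuzzyImage (f i) v y)) (finite_range _).bddAbove i

lemma exists_Zop_eq (hρ : Admissible ρ) (v : X → ℝ) (y : X) :
    ∃ i, Zop f ρ v y = ρ i (fuzzyImage (f i) v y) :=
  have := hρ.nonempty
  exists_eq_ciSup_of_finite.imp fun _ h => h.symm

lemma IsSimpleFuzzy.Zop (hρ : Admissible ρ) {v : X → ℝ} (hv : IsSimpleFuzzy v) :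
    IsSimpleFuzzy (Zop f ρ v) := by
  refine ⟨Zop_mem_Icc hρ hv.1,
    (finite_iUnion fun i => (hv.2.insert 0).image (ρ i)).subset ?_⟩
  rintro _ ⟨y, rfl⟩
  obtain ⟨i, hi⟩ := exists_Zop_eq hρ v y
  refine mem_iUnion.2 ⟨i, hi ▸ mem_image_of_mem _ ?_⟩
  rcases fuzzyImage_eq_zero_or_exists hv.2 y with h | ⟨x, -, h⟩
  · exact h ▸ mem_insert _ _
  · exact h ▸ mem_insert_of_mem _ (mem_range_self x)

lemma le_Zop_iff (hρ : Admissible ρ) {v : X → ℝ} (hv : IsSimpleFuzzy v) {α : ℝ} (hα : 0 < α)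
    (y : X) : α ≤ Zop f ρ v y ↔ ∃ i x, f i x = y ∧ α ≤ ρ i (v x) := by
  constructor
  · intro h
    obtain ⟨i, hi⟩ := exists_Zop_eq hρ v y
    rw [hi] at h
    have hpos := hρ.pos_of_le_apply (fuzzyImage_mem_Icc (f i) hv.1 y).1 hα h
    obtain ⟨x, hx, hvx⟩ := (fuzzyImage_eq_zero_or_exists hv.2 y).resolve_left hpos.ne'
    exact ⟨i, x, hx, hvx ▸ h⟩
  · rintro ⟨i, x, hx, h⟩
    calc α ≤ ρ i (v x) := h
      _ ≤ ρ i (fuzzyImage (f i) v y) :=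
        hρ.2.1 i (hv.1 x) (fuzzyImage_mem_Icc (f i) hv.1 y) (le_fuzzyImage hv.2.bddAbove hx)
      _ ≤ Zop f ρ v y := apply_fuzzyImage_le_Zop v y i

variable [DecidableEq X]

lemma isSimpleFuzzy_iterate_Zop_fdelta (hρ : Admissible ρ) (x : X) (n : ℕ) :
    IsSimpleFuzzy ((Zop f ρ)^[n] (fdelta x)) := by
  induction n with
  | zero => exact isSimpleFuzzy_fdelta x
  | succ n ih =>
    rw [Function.iterate_succ_apply']
    exact ih.Zop hρ

lemma le_iterate_Zop_fdelta_iff (hρ : Admissible ρ) (x : X) (n : ℕ) {α : ℝ} (hα : 0 < α)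
    (p : X) : α ≤ (Zop f ρ)^[n] (fdelta x) p ↔
      ∃ w : List I, w.length = n ∧ α ≤ wordGrey ρ w ∧ wordMap f w x = p := by
  induction n generalizing α p with
  | zero =>
    simp only [Function.iterate_zero, id_eq, fdelta, List.length_eq_zero_iff, exists_eq_left,
      wordGrey_nil, wordMap_nil]
    split_ifs with h
    · simp [h]
    · simp [Ne.symm h, hα.not_ge]
  | succ n ih =>
    have hv := isSimpleFuzzy_iterate_Zop_fdelta (f := f) hρ x n
    rw [Function.iterate_succ_apply', le_Zop_iff hρ hv hα]
    constructor
    · rintro ⟨i, q, rfl, h⟩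
      obtain ⟨w, hw, hgrey, rfl⟩ := (ih (hρ.pos_of_le_apply (hv.1 q).1 hα h) q).1 le_rfl
      exact ⟨i :: w, by simp [hw], h.trans (hρ.2.1 i (hv.1 _) (hρ.wordGrey_mem_Icc w) hgrey), rfl⟩
    · rintro ⟨_ | ⟨i, w⟩, hw, hgrey, rfl⟩
      · simp at hw
      · have hpos := hρ.pos_of_le_apply (hρ.wordGrey_mem_Icc w).1 hα hgrey
        have hle := (ih hpos (wordMap f w x)).2 ⟨w, by simpa using hw, le_rfl, rfl⟩
        exact ⟨i, wordMap f w x, rfl,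
          hgrey.trans (hρ.2.1 i (hρ.wordGrey_mem_Icc w) (hv.1 _) hle)⟩

end Zop

open Bornology

section AlphaCut

variable {X : Type*}

def alphaCut (v : X → ℝ) (α : ℝ) : Set X := {x | α ≤ v x}

lemma alphaCut_subset_pos {v : X → ℝ} {α : ℝ} (hα : 0 < α) :
    alphaCut v α ⊆ {x | 0 < v x} :=
  fun _ hx => hα.trans_le hx

lemma le_of_forall_alphaCut_subset {u v : X → ℝ} (hu : ∀ x, u x ≤ 1) (hv : ∀ x, 0 ≤ v x)
    (h : ∀ α ∈ Ioc (0 : ℝ) 1, alphaCut u α ⊆ alphaCut v α) : u ≤ v := fun x =>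
  (le_or_gt (u x) 0).elim (fun h0 => h0.trans (hv x)) fun hpos =>
    h (u x) ⟨hpos, hu x⟩ (le_refl (u x))

variable [MetricSpace X]

lemma UpperSemicontinuous.isClosed_alphaCut {v : X → ℝ} (hv : UpperSemicontinuous v) (α : ℝ) :
    IsClosed (alphaCut v α) :=
  hv.isClosed_preimage α

lemma IsFuzzyN.alphaCut_nonempty {v : X → ℝ} (hv : IsFuzzyN v) {α : ℝ} (hα : α ≤ 1) :
    (alphaCut v α).Nonempty :=
  let ⟨x, hx⟩ := hv.2.1
  ⟨x, (hx.symm ▸ hα : α ≤ v x)⟩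

lemma IsFuzzyN.isBounded_pos {v : X → ℝ} (hv : IsFuzzyN v) : IsBounded {x | 0 < v x} :=
  hv.2.2.isBounded.subset subset_closure

lemma hausdorffDist_le_diam_of_subset {s t B : Set X} (hB : IsBounded B) (hs : s ⊆ B)
    (ht : t ⊆ B) : hausdorffDist s t ≤ diam B := by
  rcases s.eq_empty_or_nonempty with rfl | hs'
  · rw [hausdorffDist_empty']
    exact diam_nonneg
  rcases t.eq_empty_or_nonempty with rfl | ht'
  · rw [hausdorffDist_empty]
    exact diam_nonneg
  exact (hausdorffDist_le_diam hs' (hB.subset hs) ht' (hB.subset ht)).trans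
    (diam_mono (union_subset hs ht) hB)

lemma hausdorffDist_image_le {α : Type*} {F G : α → X} {S : Set α} {r : ℝ} (hr : 0 ≤ r)
    (h : ∀ a ∈ S, dist (F a) (G a) ≤ r) : hausdorffDist (F '' S) (G '' S) ≤ r :=
  hausdorffDist_le_of_mem_dist hr
    (by rintro _ ⟨a, ha, rfl⟩; exact ⟨G a, mem_image_of_mem G ha, h a ha⟩)
    (by rintro _ ⟨a, ha, rfl⟩; exact ⟨F a, mem_image_of_mem F ha, dist_comm (G a) (F a) ▸ h a ha⟩)

lemma eq_of_tendsto_hausdorffDist {s : ℕ → Set X} {t t' : Set X} (ht : IsClosed t)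
    (ht' : IsClosed t') (hfin : ∀ n, hausdorffEDist (s n) t ≠ ⊤)
    (hfin' : ∀ n, hausdorffEDist (s n) t' ≠ ⊤)
    (h : Tendsto (fun n => hausdorffDist (s n) t) atTop (𝓝 0))
    (h' : Tendsto (fun n => hausdorffDist (s n) t') atTop (𝓝 0)) : t = t' := by
  have hfin_t : ∀ n, hausdorffEDist t (s n) ≠ ⊤ := fun n => by
    rw [hausdorffEDist_comm]
    exact hfin n
  have hfin_tt' : hausdorffEDist t t' ≠ ⊤ :=
    ne_top_of_le_ne_top (ENNReal.add_ne_top.2 ⟨hfin_t 0, hfin' 0⟩) hausdorffEDist_triangle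
  refine (ht.hausdorffDist_zero_iff_eq ht' hfin_tt').1 (le_antisymm ?_ hausdorffDist_nonneg)
  refine ge_of_tendsto' (by simpa using h.add h') fun n => ?_
  calc hausdorffDist t t' ≤ hausdorffDist t (s n) + hausdorffDist (s n) t' :=
        hausdorffDist_triangle (hfin_t n)
    _ = hausdorffDist (s n) t + hausdorffDist (s n) t' := by rw [hausdorffDist_comm]

lemma hausdorffDist_alphaCut_le_dInfty {u v : X → ℝ} (hu : IsBounded {x | 0 < u x})
    (hv : IsBounded {x | 0 < v x}) {α : ℝ} (hα : α ∈ Ioc (0 : ℝ) 1) :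
    hausdorffDist (alphaCut u α) (alphaCut v α) ≤ dInfty u v := by
  refine le_ciSup (f := fun β : Ioc (0 : ℝ) 1 => hausdorffDist (alphaCut u β) (alphaCut v β))
    ⟨diam ({x | 0 < u x} ∪ {x | 0 < v x}), ?_⟩ ⟨α, hα⟩
  rintro _ ⟨β, rfl⟩
  exact hausdorffDist_le_diam_of_subset (hu.union hv)
    ((alphaCut_subset_pos β.2.1).trans subset_union_left)
    ((alphaCut_subset_pos β.2.1).trans subset_union_right)

end AlphaCut

section Iterates

variable {X I : Type*} [DecidableEq X] [Finite I] {f : I → X → X} {ρ : I → ℝ → ℝ} {α : ℝ}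

lemma alphaCut_iterate_Zop_fdelta (hρ : Admissible ρ) (x : X) (n : ℕ) (hα : 0 < α) :
    alphaCut ((Zop f ρ)^[n] (fdelta x)) α =
      (wordMap f · x) '' {w | w.length = n ∧ α ≤ wordGrey ρ w} := by
  ext p
  simp only [alphaCut, mem_ofPred_eq, le_iterate_Zop_fdelta_iff hρ x n hα, mem_image, and_assoc]

lemma alphaCut_iterate_Zop_fdelta_subset (hρ : Admissible ρ) (x : X) (n : ℕ) (hα : 0 < α) :
    alphaCut ((Zop f ρ)^[n] (fdelta x)) α ⊆ (wordMap f · x) '' {w | w.length = n} := by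
  rw [alphaCut_iterate_Zop_fdelta hρ x n hα]
  exact image_mono fun _ hw => hw.1

lemma alphaCut_iterate_Zop_fdelta_subset_orbitIFS (hρ : Admissible ρ) (x : X) (n : ℕ)
    (hα : 0 < α) : alphaCut ((Zop f ρ)^[n] (fdelta x)) α ⊆ orbitIFS f x :=
  (alphaCut_iterate_Zop_fdelta_subset hρ x n hα).trans <| by
    rintro _ ⟨w, -, rfl⟩
    exact wordMap_mem_orbitIFS w x

lemma alphaCut_iterate_Zop_fdelta_nonempty (hρ : Admissible ρ) (x : X) (n : ℕ)
    (hα : α ∈ Ioc (0 : ℝ) 1) : (alphaCut ((Zop f ρ)^[n] (fdelta x)) α).Nonempty := by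
  obtain ⟨w, hw, hgrey⟩ := hρ.exists_wordGrey_eq_one n
  exact ⟨wordMap f w x, (le_iterate_Zop_fdelta_iff hρ x n hα.1 _).2 ⟨w, hw, hgrey ▸ hα.2, rfl⟩⟩

lemma isBounded_pos_iterate_Zop_fdelta [MetricSpace X] (hρ : Admissible ρ) (x : X) (n : ℕ) :
    IsBounded {p | 0 < (Zop f ρ)^[n] (fdelta x) p} :=
  ((List.finite_length_eq I n).image _).isBounded.subset fun p hp =>
    alphaCut_iterate_Zop_fdelta_subset hρ x n hp (le_refl ((Zop f ρ)^[n] (fdelta x) p))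

lemma hausdorffEDist_alphaCut_iterate_Zop_fdelta_ne_top [MetricSpace X] (hρ : Admissible ρ)
    (x : X) (n : ℕ) {v : X → ℝ} (hv : IsBounded {p | 0 < v p})
    (hvα : (alphaCut v α).Nonempty) (hα : α ∈ Ioc (0 : ℝ) 1) :
    hausdorffEDist (alphaCut ((Zop f ρ)^[n] (fdelta x)) α) (alphaCut v α) ≠ ⊤ :=
  hausdorffEDist_ne_top_of_nonempty_of_bounded (alphaCut_iterate_Zop_fdelta_nonempty hρ x n hα)
    hvα ((isBounded_pos_iterate_Zop_fdelta hρ x n).subset (alphaCut_subset_pos hα.1))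
    (hv.subset (alphaCut_subset_pos hα.1))

end Iterates

section OrbitalContraction

variable {X I : Type*} [MetricSpace X] {f : I → X → X} {C : ℝ}

lemma OrbitalContr.dist_wordMap_le (horb : OrbitalContr f C) (hC0 : 0 ≤ C) {a x : X}
    (ha : a ∈ orbitIFS f x) (w : List I) :
    dist (wordMap f w a) (wordMap f w x) ≤ C ^ w.length * dist a x := by
  induction w with
  | nil => simp
  | cons i w ih =>
    calc dist (wordMap f (i :: w) a) (wordMap f (i :: w) x)
        ≤ C * dist (wordMap f w a) (wordMap f w x) :=
          horb i x _ (wordMap_mem_orbitIFS_of_mem ha w) _ (wordMap_mem_orbitIFS w x)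
      _ ≤ C * (C ^ w.length * dist a x) := by gcongr
      _ = C ^ (i :: w).length * dist a x := by rw [List.length_cons, pow_succ]; ring

lemma OrbitalContr.isBounded_orbitIFS [Finite I] (horb : OrbitalContr f C) (hC0 : 0 ≤ C)
    (hC1 : C < 1) (x : X) : IsBounded (orbitIFS f x) := by
  set M := ⨆ i, dist (f i x) x
  have hM i : dist (f i x) x ≤ M :=
    le_ciSup (f := fun i => dist (f i x) x) (finite_range _).bddAbove i
  have hM0 : 0 ≤ M := Real.iSup_nonneg fun _ => dist_nonneg
  have hC : 0 < 1 - C := sub_pos.2 hC1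
  refine (isBounded_iff_subset_closedBall x).2 ⟨M / (1 - C), ?_⟩
  rw [orbitIFS_eq_range]
  rintro _ ⟨w, rfl⟩
  rw [mem_closedBall]
  induction w with
  | nil => simpa using div_nonneg hM0 hC.le
  | cons i w ih =>
    calc dist (f i (wordMap f w x)) x ≤ dist (f i (wordMap f w x)) (f i x) + dist (f i x) x :=
          dist_triangle _ _ _
      _ ≤ C * (M / (1 - C)) + M :=
          add_le_add ((horb i x _ (wordMap_mem_orbitIFS w x) x (self_mem_orbitIFS x)).trans
            (by gcongr)) (hM i)
      _ = M / (1 - C) := by field_simp; ring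

lemma OrbitalContr.dist_wordMap_le_of_mem_closure (horb : OrbitalContr f C) (hC0 : 0 ≤ C)
    (hf : ∀ i, Continuous (f i)) {x y : X} (hb : IsBounded (orbitIFS f x))
    (hy : y ∈ closure (orbitIFS f x)) (w : List I) :
    dist (wordMap f w y) (wordMap f w x) ≤ C ^ w.length * diam (orbitIFS f x) := by
  refine closure_minimal (fun a ha => ?_)
    (isClosed_le ((continuous_wordMap hf w).dist continuous_const) continuous_const) hy
  exact (horb.dist_wordMap_le hC0 ha w).trans
    (by gcongr; exact dist_le_diam_of_mem hb ha (self_mem_orbitIFS x))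

lemma hausdorffDist_alphaCut_iterate_Zop_fdelta_le [DecidableEq X] [Finite I]
    {ρ : I → ℝ → ℝ} (hρ : Admissible ρ) (horb : OrbitalContr f C) (hC0 : 0 ≤ C)
    (hf : ∀ i, Continuous (f i)) {x y : X} (hb : IsBounded (orbitIFS f x))
    (hy : y ∈ closure (orbitIFS f x)) (n : ℕ) {α : ℝ} (hα : 0 < α) :
    hausdorffDist (alphaCut ((Zop f ρ)^[n] (fdelta y)) α)
      (alphaCut ((Zop f ρ)^[n] (fdelta x)) α) ≤ C ^ n * diam (orbitIFS f x) := by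
  rw [alphaCut_iterate_Zop_fdelta hρ y n hα, alphaCut_iterate_Zop_fdelta hρ x n hα]
  refine hausdorffDist_image_le (mul_nonneg (pow_nonneg hC0 n) diam_nonneg) fun w hw => ?_
  simpa [hw.1] using horb.dist_wordMap_le_of_mem_closure hC0 hf hb hy w

end OrbitalContraction

section Limits

variable {X I : Type*} [MetricSpace X] [DecidableEq X] [Finite I] {f : I → X → X}
  {ρ : I → ℝ → ℝ} {C : ℝ} {g : X → ℝ} {z : X} {α : ℝ}

lemma tendsto_hausdorffDist_alphaCut_iterate_Zop_fdelta (hρ : Admissible ρ) (hg : IsFuzzyN g)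
    (hlim : Tendsto (fun n => dInfty ((Zop f ρ)^[n] (fdelta z)) g) atTop (𝓝 0))
    (hα : α ∈ Ioc (0 : ℝ) 1) :
    Tendsto (fun n => hausdorffDist (alphaCut ((Zop f ρ)^[n] (fdelta z)) α) (alphaCut g α))
      atTop (𝓝 0) :=
  squeeze_zero (fun _ => hausdorffDist_nonneg)
    (fun n => hausdorffDist_alphaCut_le_dInfty (isBounded_pos_iterate_Zop_fdelta hρ z n)
      hg.isBounded_pos hα) hlim

lemma mem_closure_orbitIFS_of_pos (hρ : Admissible ρ) (hg : IsFuzzyN g)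
    (hlim : Tendsto (fun n => dInfty ((Zop f ρ)^[n] (fdelta z)) g) atTop (𝓝 0)) {y : X}
    (hy : 0 < g y) : y ∈ closure (orbitIFS f z) := by
  have hα : g y ∈ Ioc (0 : ℝ) 1 := ⟨hy, (hg.1 y).2⟩
  rw [mem_closure_iff_infDist_zero ⟨z, self_mem_orbitIFS z⟩]
  refine le_antisymm (ge_of_tendsto' (tendsto_hausdorffDist_alphaCut_iterate_Zop_fdelta hρ hg
    hlim hα) fun n => ?_) infDist_nonneg
  calc infDist y (orbitIFS f z)
      ≤ infDist y (alphaCut ((Zop f ρ)^[n] (fdelta z)) (g y)) :=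
        infDist_le_infDist_of_subset (alphaCut_iterate_Zop_fdelta_subset_orbitIFS hρ z n hy)
          (alphaCut_iterate_Zop_fdelta_nonempty hρ z n hα)
    _ ≤ hausdorffDist (alphaCut g (g y)) (alphaCut ((Zop f ρ)^[n] (fdelta z)) (g y)) := by
        refine infDist_le_hausdorffDist_of_mem (le_refl (g y)) ?_
        rw [hausdorffEDist_comm]
        exact hausdorffEDist_alphaCut_iterate_Zop_fdelta_ne_top hρ z n hg.isBounded_pos
          (hg.alphaCut_nonempty hα.2) hα
    _ = hausdorffDist (alphaCut ((Zop f ρ)^[n] (fdelta z)) (g y)) (alphaCut g (g y)) :=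
        hausdorffDist_comm

lemma tendsto_hausdorffDist_alphaCut_iterate_Zop_fdelta_of_mem_closure (hρ : Admissible ρ)
    (hf : ∀ i, Continuous (f i)) (hC0 : 0 ≤ C) (hC1 : C < 1) (horb : OrbitalContr f C)
    (hg : IsFuzzyN g)
    (hlim : Tendsto (fun n => dInfty ((Zop f ρ)^[n] (fdelta z)) g) atTop (𝓝 0)) {y : X}
    (hy : y ∈ closure (orbitIFS f z)) (hα : α ∈ Ioc (0 : ℝ) 1) :
    Tendsto (fun n => hausdorffDist (alphaCut ((Zop f ρ)^[n] (fdelta y)) α) (alphaCut g α))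
      atTop (𝓝 0) := by
  have hb := horb.isBounded_orbitIFS hC0 hC1 z
  have hC : Tendsto (fun n => C ^ n * diam (orbitIFS f z)) atTop (𝓝 0) := by
    simpa using (tendsto_pow_atTop_nhds_zero_of_lt_one hC0 hC1).mul_const (diam (orbitIFS f z))
  have hsum := hC.add (tendsto_hausdorffDist_alphaCut_iterate_Zop_fdelta hρ hg hlim hα)
  rw [add_zero] at hsum
  refine squeeze_zero (fun _ => hausdorffDist_nonneg) (fun n => ?_) hsum
  exact (hausdorffDist_triangle (hausdorffEDist_alphaCut_iterate_Zop_fdelta_ne_top hρ y n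
      (isBounded_pos_iterate_Zop_fdelta hρ z n)
      (alphaCut_iterate_Zop_fdelta_nonempty hρ z n hα) hα)).trans
    (add_le_add_left (hausdorffDist_alphaCut_iterate_Zop_fdelta_le hρ horb hC0 hf hb hy n hα.1) _)

theorem IsFuzzyStar.eq_of_tendsto_of_pos (hρ : Admissible ρ) (hf : ∀ i, Continuous (f i))
    (hC0 : 0 ≤ C) (hC1 : C < 1) (horb : OrbitalContr f C) {g' : X → ℝ} {z' y : X}
    (hg : IsFuzzyStar g) (hg' : IsFuzzyStar g')
    (hlim : Tendsto (fun n => dInfty ((Zop f ρ)^[n] (fdelta z)) g) atTop (𝓝 0))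
    (hlim' : Tendsto (fun n => dInfty ((Zop f ρ)^[n] (fdelta z')) g') atTop (𝓝 0))
    (hy : 0 < g y) (hy' : 0 < g' y) : g = g' := by
  have hcl := mem_closure_orbitIFS_of_pos hρ hg.1 hlim hy
  have hcl' := mem_closure_orbitIFS_of_pos hρ hg'.1 hlim' hy'
  have hcut : ∀ α ∈ Ioc (0 : ℝ) 1, alphaCut g α = alphaCut g' α := fun α hα =>
    eq_of_tendsto_hausdorffDist (hg.2.isClosed_alphaCut α) (hg'.2.isClosed_alphaCut α)
      (fun n => hausdorffEDist_alphaCut_iterate_Zop_fdelta_ne_top hρ y n hg.1.isBounded_pos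
        (hg.1.alphaCut_nonempty hα.2) hα)
      (fun n => hausdorffEDist_alphaCut_iterate_Zop_fdelta_ne_top hρ y n hg'.1.isBounded_pos
        (hg'.1.alphaCut_nonempty hα.2) hα)
      (tendsto_hausdorffDist_alphaCut_iterate_Zop_fdelta_of_mem_closure hρ hf hC0 hC1 horb hg.1
        hlim hcl hα)
      (tendsto_hausdorffDist_alphaCut_iterate_Zop_fdelta_of_mem_closure hρ hf hC0 hC1 horb hg'.1
        hlim' hcl' hα)
  exact le_antisymm
    (le_of_forall_alphaCut_subset (fun x => (hg.1.1 x).2) (fun x => (hg'.1.1 x).1)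
      fun α hα => (hcut α hα).subset)
    (le_of_forall_alphaCut_subset (fun x => (hg'.1.1 x).2) (fun x => (hg.1.1 x).1)
      fun α hα => (hcut α hα).superset)

end Limits

lemma exists_eq_ciSup_of_pos_eq {ι : Type*} [Nonempty ι] {a : ι → ℝ} (h0 : ∀ i, 0 ≤ a i)
    (h : ∀ i j, 0 < a i → 0 < a j → a i = a j) : ∃ i, a i = ⨆ j, a j := by
  by_cases hpos : ∃ i, 0 < a i
  · obtain ⟨i, hi⟩ := hpos
    have hle : ∀ j, a j ≤ a i := fun j =>
      (h0 j).eq_or_lt.elim (fun hj => hj ▸ hi.le) fun hj => (h j i hj hi).le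
    exact ⟨i, le_antisymm (le_ciSup ⟨a i, forall_mem_range.2 hle⟩ i) (ciSup_le hle)⟩
  · simp only [not_exists, not_lt] at hpos
    have ha : a = fun _ => 0 := funext fun j => le_antisymm (hpos j) (h0 j)
    obtain ⟨i⟩ := ‹Nonempty ι›
    exact ⟨i, by simp [ha]⟩

theorem stmt10_general {X I : Type*} [MetricSpace X] [DecidableEq X]
    [Finite I]
    (f : I → X → X) (hcont : ∀ i, Continuous (f i))
    (C : ℝ) (hC0 : 0 ≤ C) (hC1 : C < 1) (horb : OrbitalContr f C)
    (ρ : I → ℝ → ℝ) (hρ : Admissible ρ)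
    (u : X → ℝ) (hu : InFS f u)
    (U : X → X → ℝ) (hUStar : ∀ x, 0 < u x → InFS f (U x))
    (hU : ∀ x, 0 < u x →
      Tendsto (fun n => dInfty ((Zop f ρ)^[n] (fdelta x)) (U x)) atTop (nhds 0)) :
    ∀ y, ∃ x : {x // 0 < u x}, U x.1 y = ⨆ z : {z // 0 < u z}, U z.1 y := by
  intro y
  obtain ⟨x₁, hx₁⟩ := hu.1.1.2.1
  have : Nonempty {x // 0 < u x} := ⟨⟨x₁, hx₁ ▸ one_pos⟩⟩
  refine exists_eq_ciSup_of_pos_eq (fun x => ((hUStar x.1 x.2).1.1.1 y).1) fun x x' hx hx' => ?_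
  rw [IsFuzzyStar.eq_of_tendsto_of_pos hρ hcont hC0 hC1 horb (hUStar x.1 x.2).1
    (hUStar x'.1 x'.2).1 (hU x.1 x.2) (hU x'.1 x'.2) hx hx']

/-- Remark 3.5: the pointwise supremum `∨_{x ∈ [u]^*} u_x` is attained
as a pointwise maximum. -/
theorem stmt10 {X I : Type*} [MetricSpace X] [CompleteSpace X] [DecidableEq X]
    [Finite I] [Nonempty I]
    (f : I → X → X) (hcont : ∀ i, Continuous (f i))
    (C : ℝ) (hC0 : 0 ≤ C) (hC1 : C < 1) (horb : OrbitalContr f C)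
    (ρ : I → ℝ → ℝ) (hρ : Admissible ρ)
    (u : X → ℝ) (hu : InFS f u)
    (U : X → X → ℝ) (hUStar : ∀ x, 0 < u x → InFS f (U x))
    (hU : ∀ x, 0 < u x →
      Tendsto (fun n => dInfty ((Zop f ρ)^[n] (fdelta x)) (U x)) atTop (nhds 0)) :
    ∀ y, ∃ x : {x // 0 < u x}, U x.1 y = ⨆ z : {z // 0 < u z}, U z.1 y :=
  stmt10_general f hcont C hC0 hC1 horb ρ hρ u hu U hUStar hU
end

section
/- Let S_Z be an orbital fuzzy iterated function system and u ∈ F*_S. Then {u_x : x ∈ [u]^*} = {u_x : x ∈ [u]^1}, where [u]^1 = {x : u(x) = 1}. In particular ∨_{x∈[u]^*} u_x = ∨_{x∈[u]^1} u_x. -/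
open Metric Filter Topology Set

/-!
Write `f_l = f_{i₁} ∘ ⋯ ∘ f_{iₙ}` and `ρ_l = ρ_{i₁} ∘ ⋯ ∘ ρ_{iₙ}` for a word `l = i₁ ⋯ iₙ`.
Since every `ρ_i` is monotone with `ρ_i 0 = 0`, `Zⁿ(δ_x)(t)` is the largest `ρ_l(1)` over the
words `l` of length `n` with `f_l x = t` (or `0` if there is none). Hence the `α`-cut of
`Zⁿ(δ_x)` is the image of `x` under the maps `f_l` with `|l| = n` and `α ≤ ρ_l(1)`, a set of
words that does not depend on `x`. For `x, y` in one orbit the orbital contraction gives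
`d(f_l x, f_l y) ≤ Cⁿ d(x, y)`, so the `α`-cuts of `Zⁿ(δ_x)` and `Zⁿ(δ_y)` are `Cⁿ d(x, y)`-close
in the Hausdorff distance. Letting `n → ∞`, the closed `α`-cuts of the limits `u_x` and `u_y`
coincide, so `u_x = u_y`. Every `x ∈ [u]^*` shares an orbit with some point of `[u]^1`.
-/

section SupOfUnitInterval

lemma sSup_mem_Icc_of_subset {s : Set ℝ} (hs : s ⊆ Icc 0 1) : sSup s ∈ Icc (0 : ℝ) 1 :=
  ⟨Real.sSup_nonneg fun _ hx => (hs hx).1, Real.sSup_le (fun _ hx => (hs hx).2) zero_le_one⟩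

lemma le_sSup_iff_of_finite {s : Set ℝ} (hs : s.Finite) {α : ℝ} (hα : 0 < α) :
    α ≤ sSup s ↔ ∃ r ∈ s, α ≤ r := by
  rcases s.eq_empty_or_nonempty with rfl | hne
  · simp [hα.not_ge]
  · exact ⟨fun h => ⟨sSup s, hne.csSup_mem hs, h⟩,
      fun ⟨r, hr, hαr⟩ => hαr.trans (le_csSup hs.bddAbove hr)⟩

lemma MonotoneOn.map_sSup_of_finite {φ : ℝ → ℝ} (hφ : MonotoneOn φ (Icc 0 1)) (hφ0 : φ 0 = 0)
    {s : Set ℝ} (hs : s.Finite) (hs01 : s ⊆ Icc 0 1) : φ (sSup s) = sSup (φ '' s) := by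
  rcases s.eq_empty_or_nonempty with rfl | hne
  · simp [hφ0]
  · have hmax : IsGreatest s (sSup s) :=
      ⟨hne.csSup_mem hs, fun _ hr => le_csSup hs.bddAbove hr⟩
    exact ((hφ.mono hs01).map_isGreatest hmax).csSup_eq.symm

lemma sSup_iUnion_of_subset_Icc {ι : Type*} [Finite ι] {A : ι → Set ℝ}
    (hA : ∀ i, A i ⊆ Icc 0 1) : sSup (⋃ i, A i) = ⨆ i, sSup (A i) := by
  have hA' : ⋃ i, A i ⊆ Icc 0 1 := iUnion_subset hA
  apply le_antisymm
  · refine Real.sSup_le (fun r hr => ?_)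
      (Real.iSup_nonneg fun i => (sSup_mem_Icc_of_subset (hA i)).1)
    obtain ⟨i, hri⟩ := mem_iUnion.1 hr
    exact (le_csSup (bddAbove_Icc.mono (hA i)) hri).trans
      (le_ciSup (f := fun i => sSup (A i)) (Set.finite_range _).bddAbove i)
  · exact Real.iSup_le (fun i => Real.sSup_le
      (fun _ hr => le_csSup (bddAbove_Icc.mono hA') (mem_iUnion_of_mem i hr))
      (sSup_mem_Icc_of_subset hA').1) (sSup_mem_Icc_of_subset hA').1

end SupOfUnitInterval

lemma fuzzyImage_sSup_fiber {W X : Type*} (g : X → X) (p : W → X) (val : W → ℝ) (q : W → Prop)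
    (hval : ∀ w, val w ∈ Icc (0 : ℝ) 1) (t : X) :
    fuzzyImage g (fun s => sSup (val '' {w | q w ∧ p w = s})) t =
      sSup (val '' {w | q w ∧ g (p w) = t}) := by
  have hsub : ∀ S : Set W, val '' S ⊆ Icc 0 1 := fun S => by rintro _ ⟨w, -, rfl⟩; exact hval w
  have hfiber : ∀ S : Set X, (fun s => sSup (val '' {w | q w ∧ p w = s})) '' S ⊆ Icc 0 1 :=
    fun S => by rintro _ ⟨s, -, rfl⟩; exact sSup_mem_Icc_of_subset (hsub _)
  apply le_antisymm
  · refine Real.sSup_le ?_ (sSup_mem_Icc_of_subset (hsub _)).1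
    rintro _ ⟨s, hs, rfl⟩
    refine Real.sSup_le ?_ (sSup_mem_Icc_of_subset (hsub _)).1
    rintro _ ⟨w, ⟨hq, rfl⟩, rfl⟩
    exact le_csSup (bddAbove_Icc.mono (hsub _)) ⟨w, ⟨hq, hs⟩, rfl⟩
  · refine Real.sSup_le ?_ (sSup_mem_Icc_of_subset (hfiber _)).1
    rintro _ ⟨w, ⟨hq, hw⟩, rfl⟩
    exact (le_csSup (bddAbove_Icc.mono (hsub _))
      (mem_image_of_mem val (show w ∈ {w' | q w' ∧ p w' = p w} from ⟨hq, rfl⟩))).trans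
      (le_csSup (bddAbove_Icc.mono (hfiber _)) ⟨p w, hw, rfl⟩)

section Orbit

variable {X I : Type*} {f : I → X → X}

lemma foldr_mem_orbitIFS {w x : X} (hx : x ∈ orbitIFS f w) (l : List I) :
    l.foldr f x ∈ orbitIFS f w := by
  obtain ⟨m, hm⟩ := mem_iUnion.1 hx
  rw [mem_singleton_iff] at hm
  exact mem_iUnion.2 ⟨l ++ m, by rw [mem_singleton_iff, List.foldr_append, hm]⟩

lemma OrbitalContr.dist_foldr_le [MetricSpace X] {C : ℝ} (horb : OrbitalContr f C) (hC0 : 0 ≤ C)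
    {w x y : X} (hx : x ∈ orbitIFS f w) (hy : y ∈ orbitIFS f w) :
    ∀ l : List I, dist (l.foldr f x) (l.foldr f y) ≤ C ^ l.length * dist x y
  | [] => by simp
  | i :: l =>
    calc dist (f i (l.foldr f x)) (f i (l.foldr f y))
        ≤ C * dist (l.foldr f x) (l.foldr f y) :=
          horb i w _ (foldr_mem_orbitIFS hx l) _ (foldr_mem_orbitIFS hy l)
      _ ≤ C * (C ^ l.length * dist x y) :=
          mul_le_mul_of_nonneg_left (horb.dist_foldr_le hC0 hx hy l) hC0
      _ = C ^ (i :: l).length * dist x y := by rw [List.length_cons, pow_succ]; ring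

end Orbit

section IteratedDelta

variable {X I : Type*} {f : I → X → X} {ρ : I → ℝ → ℝ}

lemma foldr_mem_Icc (hρ : Admissible ρ) : ∀ l : List I, l.foldr ρ 1 ∈ Icc (0 : ℝ) 1
  | [] => ⟨zero_le_one, le_rfl⟩
  | i :: l => hρ.2.2.2.1 i _ (foldr_mem_Icc hρ l)

variable [Finite I]

lemma finite_image_setOf_length_eq (g : List I → ℝ) (n : ℕ) (P : List I → Prop) :
    (g '' {l : List I | l.length = n ∧ P l}).Finite :=
  ((List.finite_length_eq I n).subset fun _ hl => hl.1).image g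

variable [DecidableEq X]

theorem Zop_iterate_fdelta_apply (hρ : Admissible ρ) (x : X) (n : ℕ) (t : X) :
    (Zop f ρ)^[n] (fdelta x) t =
      sSup (List.foldr ρ 1 '' {l : List I | l.length = n ∧ l.foldr f x = t}) := by
  have hsub : ∀ S : Set (List I), List.foldr ρ 1 '' S ⊆ Icc 0 1 := fun S => by
    rintro _ ⟨l, -, rfl⟩; exact foldr_mem_Icc hρ l
  induction n generalizing t with
  | zero =>
    have hset : {l : List I | l.length = 0 ∧ l.foldr f x = t} = {l | l = [] ∧ x = t} := by
      ext l
      simp only [mem_ofPred_eq, List.length_eq_zero_iff]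
      constructor <;> rintro ⟨rfl, h⟩ <;> exact ⟨rfl, h⟩
    rw [hset]
    by_cases h : x = t <;> simp [fdelta, h, eq_comm]
  | succ n ih =>
    have hv : (Zop f ρ)^[n] (fdelta x) =
        fun s => sSup (List.foldr ρ 1 '' {l : List I | l.length = n ∧ l.foldr f x = s}) := funext ih
    rw [Function.iterate_succ_apply', hv]
    calc ⨆ i, ρ i (fuzzyImage (f i)
          (fun s => sSup (List.foldr ρ 1 '' {l | l.length = n ∧ l.foldr f x = s})) t)
        = ⨆ i, sSup ((fun l : List I => ρ i (l.foldr ρ 1)) ''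
            {l | l.length = n ∧ f i (l.foldr f x) = t}) := by
          refine iSup_congr fun i => ?_
          rw [fuzzyImage_sSup_fiber _ _ _ _ (foldr_mem_Icc hρ),
            (hρ.2.1 i).map_sSup_of_finite (hρ.1 i) (finite_image_setOf_length_eq _ _ _) (hsub _),
            image_image]
      _ = sSup (List.foldr ρ 1 '' {l | l.length = n + 1 ∧ l.foldr f x = t}) := by
          rw [← sSup_iUnion_of_subset_Icc fun i => by
            rintro _ ⟨l, -, rfl⟩; exact foldr_mem_Icc hρ (i :: l)]
          congr 1
          ext r
          simp only [mem_iUnion, mem_image, mem_ofPred_eq]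
          constructor
          · rintro ⟨i, l, ⟨hl, hlt⟩, rfl⟩
            exact ⟨i :: l, ⟨by simp [hl], hlt⟩, rfl⟩
          · rintro ⟨_ | ⟨i, l⟩, ⟨hl, hlt⟩, rfl⟩
            · simp at hl
            · exact ⟨i, l, ⟨by simpa using hl, hlt⟩, rfl⟩

lemma levelSet_Zop_iterate_fdelta (hρ : Admissible ρ) (x : X) (n : ℕ) {α : ℝ} (hα : 0 < α) :
    {t | α ≤ (Zop f ρ)^[n] (fdelta x) t} =
      List.foldr f x '' {l : List I | l.length = n ∧ α ≤ l.foldr ρ 1} := by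
  ext t
  simp only [mem_ofPred_eq, Zop_iterate_fdelta_apply hρ,
    le_sSup_iff_of_finite (finite_image_setOf_length_eq _ _ _) hα, mem_image]
  constructor
  · rintro ⟨_, ⟨l, ⟨hl, rfl⟩, rfl⟩, hαl⟩
    exact ⟨l, ⟨hl, hαl⟩, rfl⟩
  · rintro ⟨l, ⟨hl, hαl⟩, rfl⟩
    exact ⟨_, ⟨l, ⟨hl, rfl⟩, rfl⟩, hαl⟩

lemma isFuzzyN_Zop_iterate_fdelta [MetricSpace X] (hρ : Admissible ρ) (x : X) (n : ℕ) :
    IsFuzzyN ((Zop f ρ)^[n] (fdelta x)) := by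
  obtain ⟨j, hj⟩ := hρ.2.2.2.2
  have hj_iter : (List.replicate n j).foldr ρ 1 = 1 := by
    induction n with
    | zero => rfl
    | succ n ih => rw [List.replicate_succ, List.foldr_cons, ih, hj]
  have hval : ∀ t, (Zop f ρ)^[n] (fdelta x) t ∈ Icc (0 : ℝ) 1 := fun t => by
    rw [Zop_iterate_fdelta_apply hρ]
    exact sSup_mem_Icc_of_subset (by rintro _ ⟨l, -, rfl⟩; exact foldr_mem_Icc hρ l)
  have hfin : (List.foldr f x '' {l : List I | l.length = n}).Finite :=
    (List.finite_length_eq I n).image _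
  have hpos : {t | 0 < (Zop f ρ)^[n] (fdelta x) t} ⊆ List.foldr f x '' {l | l.length = n} :=
    fun t ht => by
      have := (levelSet_Zop_iterate_fdelta hρ x n ht).subset
        (le_refl ((Zop f ρ)^[n] (fdelta x) t))
      exact image_mono (fun _ hl => hl.1) this
  have hone : (List.replicate n j).foldr f x ∈ {t | 1 ≤ (Zop f ρ)^[n] (fdelta x) t} := by
    rw [levelSet_Zop_iterate_fdelta hρ x n one_pos]
    exact ⟨_, ⟨List.length_replicate, hj_iter.ge⟩, rfl⟩
  exact ⟨hval, ⟨_, le_antisymm (hval _).2 hone⟩,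
    hfin.isCompact.of_isClosed_subset isClosed_closure (closure_minimal hpos hfin.isClosed)⟩

lemma hausdorffDist_levelSet_Zop_iterate_fdelta_le [MetricSpace X] {C : ℝ}
    (horb : OrbitalContr f C) (hC0 : 0 ≤ C) (hρ : Admissible ρ) {w x y : X}
    (hx : x ∈ orbitIFS f w) (hy : y ∈ orbitIFS f w) (n : ℕ) {α : ℝ} (hα : 0 < α) :
    hausdorffDist {t | α ≤ (Zop f ρ)^[n] (fdelta x) t} {t | α ≤ (Zop f ρ)^[n] (fdelta y) t} ≤
      C ^ n * dist x y := by
  rw [levelSet_Zop_iterate_fdelta hρ x n hα, levelSet_Zop_iterate_fdelta hρ y n hα]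
  refine hausdorffDist_le_of_mem_dist (by positivity) ?_ ?_
  · rintro _ ⟨l, hl, rfl⟩
    exact ⟨_, ⟨l, hl, rfl⟩, hl.1 ▸ horb.dist_foldr_le hC0 hx hy l⟩
  · rintro _ ⟨l, hl, rfl⟩
    exact ⟨_, ⟨l, hl, rfl⟩, dist_comm x y ▸ hl.1 ▸ horb.dist_foldr_le hC0 hy hx l⟩

end IteratedDelta

section LevelSets

variable {X : Type*}

lemma le_of_levelSet_subset {u v : X → ℝ} (hu : ∀ x, u x ∈ Icc (0 : ℝ) 1) (hv : ∀ x, 0 ≤ v x)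
    (h : ∀ α ∈ Ioc (0 : ℝ) 1, {x | α ≤ u x} ⊆ {x | α ≤ v x}) (x : X) : u x ≤ v x := by
  rcases (hu x).1.eq_or_lt with h0 | hpos
  · exact h0 ▸ hv x
  · exact h (u x) ⟨hpos, (hu x).2⟩ (le_refl (u x))

lemma eq_of_levelSet_eq {u v : X → ℝ} (hu : ∀ x, u x ∈ Icc (0 : ℝ) 1)
    (hv : ∀ x, v x ∈ Icc (0 : ℝ) 1) (h : ∀ α ∈ Ioc (0 : ℝ) 1, {x | α ≤ u x} = {x | α ≤ v x}) :
    u = v :=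
  funext fun x =>
    le_antisymm (le_of_levelSet_subset hu (fun y => (hv y).1) (fun α hα => (h α hα).le) x)
      (le_of_levelSet_subset hv (fun y => (hu y).1) (fun α hα => (h α hα).ge) x)

variable [MetricSpace X]

lemma eq_of_tendsto_hausdorffDist_s11 {A B : Set X} {A' B' : ℕ → Set X} (hA : IsClosed A)
    (hB : IsClosed B) (hAB : hausdorffEDist A B ≠ ⊤) (hAA' : ∀ n, hausdorffEDist A (A' n) ≠ ⊤)
    (hA'B' : ∀ n, hausdorffEDist (A' n) (B' n) ≠ ⊤)
    (hA'A : Tendsto (fun n => hausdorffDist (A' n) A) atTop (𝓝 0))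
    (hB'B : Tendsto (fun n => hausdorffDist (B' n) B) atTop (𝓝 0))
    (hA'B'0 : Tendsto (fun n => hausdorffDist (A' n) (B' n)) atTop (𝓝 0)) : A = B := by
  have hle : ∀ n, hausdorffDist A B ≤
      hausdorffDist (A' n) A + hausdorffDist (A' n) (B' n) + hausdorffDist (B' n) B := fun n =>
    calc hausdorffDist A B ≤ hausdorffDist A (A' n) + hausdorffDist (A' n) B :=
          hausdorffDist_triangle (hAA' n)
      _ ≤ hausdorffDist A (A' n) + (hausdorffDist (A' n) (B' n) + hausdorffDist (B' n) B) :=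
          add_le_add le_rfl (hausdorffDist_triangle (hA'B' n))
      _ = _ := by rw [hausdorffDist_comm, add_assoc]
  have hzero : hausdorffDist A B ≤ 0 := by
    simpa using le_of_tendsto_of_tendsto' tendsto_const_nhds ((hA'A.add hA'B'0).add hB'B) hle
  exact (hA.hausdorffDist_zero_iff_eq hB hAB).1 (hzero.antisymm hausdorffDist_nonneg)

namespace IsFuzzyN

variable {u v : X → ℝ} {α : ℝ}

lemma levelSet_subset_fsupp (hα : 0 < α) : {x | α ≤ u x} ⊆ fsupp u :=
  fun _ hx => subset_closure (hα.trans_le hx)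

lemma levelSet_nonempty (hu : IsFuzzyN u) (hα : α ≤ 1) : {x | α ≤ u x}.Nonempty :=
  let ⟨x, hx⟩ := hu.2.1
  ⟨x, hα.trans hx.ge⟩

lemma hausdorffEDist_levelSet_ne_top (hu : IsFuzzyN u) (hv : IsFuzzyN v) (hα : α ∈ Ioc (0 : ℝ) 1) :
    hausdorffEDist {x | α ≤ u x} {x | α ≤ v x} ≠ ⊤ :=
  hausdorffEDist_ne_top_of_nonempty_of_bounded (hu.levelSet_nonempty hα.2)
    (hv.levelSet_nonempty hα.2) (hu.2.2.isBounded.subset (levelSet_subset_fsupp hα.1))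
    (hv.2.2.isBounded.subset (levelSet_subset_fsupp hα.1))

lemma hausdorffDist_levelSet_le_dInfty (hu : IsFuzzyN u) (hv : IsFuzzyN v)
    (hα : α ∈ Ioc (0 : ℝ) 1) : hausdorffDist {x | α ≤ u x} {x | α ≤ v x} ≤ dInfty u v := by
  refine le_ciSup
    (f := fun β : Ioc (0 : ℝ) 1 => hausdorffDist {x | (β : ℝ) ≤ u x} {x | (β : ℝ) ≤ v x})
    ⟨diam (fsupp u ∪ fsupp v), ?_⟩ ⟨α, hα⟩
  rintro _ ⟨⟨β, hβ⟩, rfl⟩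
  have hbdd := hu.2.2.isBounded.union hv.2.2.isBounded
  exact (hausdorffDist_le_diam (hu.levelSet_nonempty hβ.2)
    (hu.2.2.isBounded.subset (levelSet_subset_fsupp hβ.1)) (hv.levelSet_nonempty hβ.2)
    (hv.2.2.isBounded.subset (levelSet_subset_fsupp hβ.1))).trans
    (diam_mono (union_subset_union (levelSet_subset_fsupp hβ.1) (levelSet_subset_fsupp hβ.1)) hbdd)

end IsFuzzyN

end LevelSets

theorem eq_of_tendsto_dInfty_of_mem_orbitIFS {X I : Type*} [MetricSpace X] [DecidableEq X]
    [Finite I] {f : I → X → X} {C : ℝ} (hC0 : 0 ≤ C) (hC1 : C < 1) (horb : OrbitalContr f C)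
    {ρ : I → ℝ → ℝ} (hρ : Admissible ρ) {w x y : X} (hx : x ∈ orbitIFS f w)
    (hy : y ∈ orbitIFS f w) {u v : X → ℝ} (hu : IsFuzzyStar u) (hv : IsFuzzyStar v)
    (hxu : Tendsto (fun n => dInfty ((Zop f ρ)^[n] (fdelta x)) u) atTop (𝓝 0))
    (hyv : Tendsto (fun n => dInfty ((Zop f ρ)^[n] (fdelta y)) v) atTop (𝓝 0)) : u = v := by
  refine eq_of_levelSet_eq hu.1.1 hv.1.1 fun α hα => ?_
  have hZ := isFuzzyN_Zop_iterate_fdelta (f := f) hρ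
  have hcontr : Tendsto (fun n => C ^ n * dist x y) atTop (𝓝 0) := by
    simpa using (tendsto_pow_atTop_nhds_zero_of_lt_one hC0 hC1).mul_const (dist x y)
  refine eq_of_tendsto_hausdorffDist_s11 (hu.2.isClosed_preimage α) (hv.2.isClosed_preimage α)
    (hu.1.hausdorffEDist_levelSet_ne_top hv.1 hα)
    (fun n => hu.1.hausdorffEDist_levelSet_ne_top (hZ x n) hα)
    (fun n => (hZ x n).hausdorffEDist_levelSet_ne_top (hZ y n) hα)
    (squeeze_zero (fun _ => hausdorffDist_nonneg)
      (fun n => (hZ x n).hausdorffDist_levelSet_le_dInfty hu.1 hα) hxu)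
    (squeeze_zero (fun _ => hausdorffDist_nonneg)
      (fun n => (hZ y n).hausdorffDist_levelSet_le_dInfty hv.1 hα) hyv)
    (squeeze_zero (fun _ => hausdorffDist_nonneg)
      (fun n => hausdorffDist_levelSet_Zop_iterate_fdelta_le horb hC0 hρ hx hy n hα.1) hcontr)

theorem stmt11_general {X I : Type*} [MetricSpace X] [DecidableEq X]
    [Finite I]
    (f : I → X → X)
    (C : ℝ) (hC0 : 0 ≤ C) (hC1 : C < 1) (horb : OrbitalContr f C)
    (ρ : I → ℝ → ℝ) (hρ : Admissible ρ)
    (u : X → ℝ) (hu : InFS f u)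
    (U : X → X → ℝ) (hUStar : ∀ x, 0 < u x → InFS f (U x))
    (hU : ∀ x, 0 < u x →
      Tendsto (fun n => dInfty ((Zop f ρ)^[n] (fdelta x)) (U x)) atTop (nhds 0)) :
    {v : X → ℝ | ∃ x, 0 < u x ∧ U x = v} = {v : X → ℝ | ∃ x, u x = 1 ∧ U x = v} ∧
    (fun y => ⨆ x : {x // 0 < u x}, U x.1 y) =
      (fun y => ⨆ x : {x // u x = 1}, U x.1 y) := by
  have hrep : ∀ x, 0 < u x → ∃ y, u y = 1 ∧ U y = U x := fun x hx => by
    obtain ⟨w, y, hxw, hyw, hy1⟩ := hu.2 x hx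
    have hy : 0 < u y := hy1 ▸ one_pos
    exact ⟨y, hy1, eq_of_tendsto_dInfty_of_mem_orbitIFS hC0 hC1 horb hρ hyw hxw
      (hUStar y hy).1 (hUStar x hx).1 (hU y hy) (hU x hx)⟩
  have hsets : {v : X → ℝ | ∃ x, 0 < u x ∧ U x = v} = {v | ∃ x, u x = 1 ∧ U x = v} := by
    ext v
    constructor
    · rintro ⟨x, hx, rfl⟩
      exact hrep x hx
    · rintro ⟨x, hx, rfl⟩
      exact ⟨x, hx ▸ one_pos, rfl⟩
  have hrange : ∀ (p : X → Prop) (t : X),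
      range (fun x : {x // p x} => U x.1 t) = (· t) '' {v | ∃ x, p x ∧ U x = v} := by
    intro p t
    ext
    simp
  refine ⟨hsets, funext fun t => ?_⟩
  simp only [iSup, hrange, hsets]

/-- Proposition 3.6: `{u_x : x ∈ [u]^*} = {u_x : x ∈ [u]^1}` and the
corresponding suprema coincide. -/
theorem stmt11 {X I : Type*} [MetricSpace X] [CompleteSpace X] [DecidableEq X]
    [Finite I] [Nonempty I]
    (f : I → X → X) (hcont : ∀ i, Continuous (f i))
    (C : ℝ) (hC0 : 0 ≤ C) (hC1 : C < 1) (horb : OrbitalContr f C)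
    (ρ : I → ℝ → ℝ) (hρ : Admissible ρ)
    (u : X → ℝ) (hu : InFS f u)
    (U : X → X → ℝ) (hUStar : ∀ x, 0 < u x → InFS f (U x))
    (hU : ∀ x, 0 < u x →
      Tendsto (fun n => dInfty ((Zop f ρ)^[n] (fdelta x)) (U x)) atTop (nhds 0)) :
    {v : X → ℝ | ∃ x, 0 < u x ∧ U x = v} = {v : X → ℝ | ∃ x, u x = 1 ∧ U x = v} ∧
    (fun y => ⨆ x : {x // 0 < u x}, U x.1 y) =
      (fun y => ⨆ x : {x // u x = 1}, U x.1 y) :=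
  stmt11_general f C hC0 hC1 horb ρ hρ u hu U hUStar hU
end

section
/- Let S_Z be an orbital fuzzy iterated function system and u ∈ F*_S. Then the fuzzy set w_u := ∨_{x∈[u]^*} u_x is upper semicontinuous; together with normality and compact support this gives w_u ∈ F*_X. -/
open Metric Filter Topology Set

/-!
Iterating the fuzzy Hutchinson–Barnsley operator on a crisp point gives
`Z^[n] (δ_x) y = max ({0} ∪ {greyLevel ρ l | l.length = n, word f l x = y})`, so the level sets
of `Z^[n] (δ_x)` are images of `x` under finitely many words. The orbital contraction makes these
iterates `dInfty`-Cauchy at rate `C ^ n`, uniformly for `x` in a compact set, and brings the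
iterates of two points of a common orbit together; hence `u_x` only depends on the orbit of `x`,
and `w_u` is the supremum of `u_a` over the compact set `{u = 1}`. On that set `a ↦ u_a` is
`dInfty`-continuous, which makes the superlevel sets of `w_u` closed, while the support of `w_u`
lies in the closure of the orbits of `{u = 1}`, a totally bounded set.
-/

namespace FuzzyIFS

section Words

variable {X I : Type*} (f : I → X → X)

def word (l : List I) (x : X) : X := l.foldr f x

@[simp] theorem word_nil (x : X) : word f [] x = x := rfl

@[simp] theorem word_cons (i : I) (l : List I) (x : X) : word f (i :: l) x = f i (word f l x) :=
  rfl

theorem word_append (l₁ l₂ : List I) (x : X) :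
    word f (l₁ ++ l₂) x = word f l₁ (word f l₂ x) :=
  List.foldr_append

theorem mem_orbitIFS_iff {x y : X} : y ∈ orbitIFS f x ↔ ∃ l, word f l x = y := by
  simp [orbitIFS, word, eq_comm]

theorem word_mem_orbitIFS (l : List I) (x : X) : word f l x ∈ orbitIFS f x :=
  (mem_orbitIFS_iff f).2 ⟨l, rfl⟩

theorem self_mem_orbitIFS (x : X) : x ∈ orbitIFS f x :=
  word_mem_orbitIFS f [] x

theorem orbitIFS_subset_of_mem {x y : X} (h : y ∈ orbitIFS f x) :
    orbitIFS f y ⊆ orbitIFS f x := by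
  obtain ⟨m, rfl⟩ := (mem_orbitIFS_iff f).1 h
  rintro z hz
  obtain ⟨l, rfl⟩ := (mem_orbitIFS_iff f).1 hz
  rw [← word_append]
  exact word_mem_orbitIFS f _ x

theorem continuous_word [TopologicalSpace X] (hf : ∀ i, Continuous (f i)) (l : List I) :
    Continuous (word f l) := by
  induction l with
  | nil => exact continuous_id
  | cons i l ih => exact (hf i).comp ih

end Words

section Contraction

variable {X I : Type*} [MetricSpace X] {f : I → X → X} {C : ℝ}

theorem dist_word_word_le (horb : OrbitalContr f C) (hC0 : 0 ≤ C) {t x y : X}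
    (hx : x ∈ orbitIFS f t) (hy : y ∈ orbitIFS f t) (l : List I) :
    dist (word f l x) (word f l y) ≤ C ^ l.length * dist x y := by
  induction l with
  | nil => simp
  | cons i l ih =>
    calc dist (word f (i :: l) x) (word f (i :: l) y)
        ≤ C * dist (word f l x) (word f l y) :=
          horb i t _ (orbitIFS_subset_of_mem f hx (word_mem_orbitIFS f l x))
            _ (orbitIFS_subset_of_mem f hy (word_mem_orbitIFS f l y))
      _ ≤ C * (C ^ l.length * dist x y) := by gcongr
      _ = C ^ (i :: l).length * dist x y := by rw [List.length_cons, pow_succ]; ring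

theorem dist_word_self_le (horb : OrbitalContr f C) (hC0 : 0 ≤ C) (hC1 : C < 1) {x : X}
    {B : ℝ} (hB0 : 0 ≤ B) (hB : ∀ i, dist (f i x) x ≤ B) (l : List I) :
    dist (word f l x) x ≤ B / (1 - C) := by
  have h1C : 0 < 1 - C := by linarith
  induction l with
  | nil => simpa using div_nonneg hB0 h1C.le
  | cons i l ih =>
    calc dist (word f (i :: l) x) x
        ≤ dist (f i (word f l x)) (f i x) + dist (f i x) x := dist_triangle _ _ _
      _ ≤ C * dist (word f l x) x + B :=
          add_le_add (horb i x _ (word_mem_orbitIFS f l x) x (self_mem_orbitIFS f x)) (hB i)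
      _ ≤ C * (B / (1 - C)) + B := by gcongr
      _ = B / (1 - C) := by field_simp; ring

theorem dist_word_take_le (horb : OrbitalContr f C) (hC0 : 0 ≤ C) (hC1 : C < 1) {x : X}
    {B : ℝ} (hB0 : 0 ≤ B) (hB : ∀ i, dist (f i x) x ≤ B) (l : List I) (n : ℕ) :
    dist (word f l x) (word f (l.take n) x) ≤ C ^ n * (B / (1 - C)) := by
  have hbound : 0 ≤ C ^ n * (B / (1 - C)) :=
    mul_nonneg (pow_nonneg hC0 n) (div_nonneg hB0 (by linarith))
  rcases lt_or_ge l.length n with hl | hl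
  · simpa [List.take_of_length_le hl.le] using hbound
  · have htake : (l.take n).length = n := List.length_take_of_le hl
    calc dist (word f l x) (word f (l.take n) x)
        = dist (word f (l.take n) (word f (l.drop n) x)) (word f (l.take n) x) := by
          rw [← word_append, List.take_append_drop]
      _ ≤ C ^ n * dist (word f (l.drop n) x) x := by
          simpa [htake] using dist_word_word_le horb hC0 (word_mem_orbitIFS f _ x)
            (self_mem_orbitIFS f x) (l.take n)
      _ ≤ C ^ n * (B / (1 - C)) := by
          gcongr; exact dist_word_self_le horb hC0 hC1 hB0 hB _

theorem exists_dist_apply_le_of_isCompact [Finite I] (hf : ∀ i, Continuous (f i)) {K : Set X}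
    (hK : IsCompact K) : ∃ B, 0 ≤ B ∧ ∀ i, ∀ x ∈ K, dist (f i x) x ≤ B := by
  obtain ⟨B, hB⟩ := (isCompact_iUnion fun i =>
    hK.image ((hf i).dist continuous_id)).isBounded.bddAbove
  exact ⟨max B 0, le_max_right _ _, fun i x hx =>
    (hB (mem_iUnion.2 ⟨i, x, hx, rfl⟩)).trans (le_max_left _ _)⟩

theorem exists_pow_mul_lt (hC0 : 0 ≤ C) (hC1 : C < 1) (c : ℝ) {δ : ℝ} (hδ : 0 < δ) :
    ∃ n : ℕ, C ^ n * c < δ :=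
  ((by simpa using (tendsto_pow_atTop_nhds_zero_of_lt_one hC0 hC1).mul_const c :
    Tendsto (fun n : ℕ => C ^ n * c) atTop (𝓝 0)).eventually (gt_mem_nhds hδ)).exists

/-- Every point of the orbit of `x ∈ K` is within `C ^ n * (B / (1 - C))` of the image of `K`
under one of the finitely many words of length at most `n`, a compact set. -/
theorem isCompact_closure_biUnion_orbitIFS [CompleteSpace X] [Finite I]
    (hf : ∀ i, Continuous (f i)) (horb : OrbitalContr f C) (hC0 : 0 ≤ C) (hC1 : C < 1)
    {K : Set X} (hK : IsCompact K) :
    IsCompact (closure (⋃ x ∈ K, orbitIFS f x)) := by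
  obtain ⟨B, hB0, hB⟩ := exists_dist_apply_le_of_isCompact hf hK
  refine isCompact_iff_totallyBounded_isComplete.2
    ⟨TotallyBounded.closure ?_, isClosed_closure.isComplete⟩
  refine Metric.totallyBounded_iff.2 fun ε hε => ?_
  obtain ⟨n, hn⟩ := exists_pow_mul_lt hC0 hC1 (B / (1 - C)) (half_pos hε)
  have hG : IsCompact (⋃ l ∈ {l : List I | l.length ≤ n}, word f l '' K) :=
    (List.finite_length_le I n).isCompact_biUnion fun l _ => hK.image (continuous_word f hf l)
  obtain ⟨t, htfin, hGt⟩ :=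
    Metric.totallyBounded_iff.1 hG.totallyBounded (ε / 2) (half_pos hε)
  refine ⟨t, htfin, iUnion₂_subset fun x hx z hz => ?_⟩
  obtain ⟨l, rfl⟩ := (mem_orbitIFS_iff f).1 hz
  obtain ⟨y, hyt, hy⟩ :=
    mem_iUnion₂.1 (hGt (mem_biUnion (List.length_take_le n l) ⟨x, hx, rfl⟩))
  refine mem_iUnion₂.2 ⟨y, hyt, ?_⟩
  calc dist (word f l x) y
      ≤ dist (word f l x) (word f (l.take n) x) + dist (word f (l.take n) x) y :=
        dist_triangle _ _ _
    _ < ε / 2 + ε / 2 :=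
        add_lt_add_of_le_of_lt ((dist_word_take_le horb hC0 hC1 hB0 (hB · x hx) l n).trans hn.le)
          (mem_ball.1 hy)
    _ = ε := add_halves ε

end Contraction

section GreyLevels

variable {I : Type*} {ρ : I → ℝ → ℝ}

variable (ρ) in
def greyLevel (l : List I) : ℝ := l.foldr ρ 1

@[simp] theorem greyLevel_nil : greyLevel ρ [] = 1 := rfl

@[simp] theorem greyLevel_cons (i : I) (l : List I) :
    greyLevel ρ (i :: l) = ρ i (greyLevel ρ l) :=
  rfl

theorem greyLevel_mem_Icc (hρ : Admissible ρ) (l : List I) :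
    greyLevel ρ l ∈ Icc (0 : ℝ) 1 := by
  induction l with
  | nil => simp
  | cons i l ih => exact hρ.2.2.2.1 i _ ih

theorem greyLevel_append_le (hρ : Admissible ρ) (l₁ l₂ : List I) :
    greyLevel ρ (l₁ ++ l₂) ≤ greyLevel ρ l₁ := by
  induction l₁ with
  | nil => exact (greyLevel_mem_Icc hρ l₂).2
  | cons i l ih =>
    exact hρ.2.1 i (greyLevel_mem_Icc hρ _) (greyLevel_mem_Icc hρ _) ih

theorem greyLevel_append_of_eq_one (l₁ : List I) {l₂ : List I} (h : greyLevel ρ l₂ = 1) :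
    greyLevel ρ (l₁ ++ l₂) = greyLevel ρ l₁ := by
  induction l₁ with
  | nil => simpa
  | cons i l ih => simp [ih]

theorem greyLevel_replicate {j : I} (hj : ρ j 1 = 1) (p : ℕ) :
    greyLevel ρ (List.replicate p j) = 1 := by
  induction p with
  | zero => rfl
  | succ p ih => simp [List.replicate_succ, ih, hj]

end GreyLevels

section Iterates

variable {X I : Type*} {f : I → X → X} {ρ : I → ℝ → ℝ}

theorem fuzzyImage_mem_Icc {g : X → X} {v : X → ℝ} (hv : ∀ x, v x ∈ Icc (0 : ℝ) 1)
    (y : X) : fuzzyImage g v y ∈ Icc (0 : ℝ) 1 :=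
  ⟨Real.sSup_nonneg (by rintro _ ⟨x, -, rfl⟩; exact (hv x).1),
    Real.sSup_le (by rintro _ ⟨x, -, rfl⟩; exact (hv x).2) zero_le_one⟩

theorem le_fuzzyImage {g : X → X} {v : X → ℝ} (hv : ∀ x, v x ∈ Icc (0 : ℝ) 1) (x : X) :
    v x ≤ fuzzyImage g v (g x) :=
  le_csSup ⟨1, by rintro _ ⟨z, -, rfl⟩; exact (hv z).2⟩ ⟨x, rfl, rfl⟩

theorem fuzzyImage_eq_zero_or_exists {g : X → X} {v : X → ℝ} (hv : (range v).Finite) (y : X) :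
    fuzzyImage g v y = 0 ∨ ∃ x, g x = y ∧ fuzzyImage g v y = v x := by
  rcases (v '' (g ⁻¹' {y})).eq_empty_or_nonempty with h | h
  · left
    simp only [fuzzyImage, h, Real.sSup_empty]
  · obtain ⟨x, hx, hsup⟩ := h.csSup_mem (hv.subset (image_subset_range _ _))
    exact Or.inr ⟨x, hx, hsup.symm⟩

theorem Zop_mem_Icc (hρ : Admissible ρ) {v : X → ℝ} (hv : ∀ x, v x ∈ Icc (0 : ℝ) 1)
    (y : X) : Zop f ρ v y ∈ Icc (0 : ℝ) 1 :=
  ⟨Real.iSup_nonneg fun i => (hρ.2.2.2.1 i _ (fuzzyImage_mem_Icc hv y)).1,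
    Real.iSup_le (fun i => (hρ.2.2.2.1 i _ (fuzzyImage_mem_Icc hv y)).2) zero_le_one⟩

variable [DecidableEq X]

theorem iterate_Zop_fdelta_mem_Icc (hρ : Admissible ρ) (n : ℕ) (x y : X) :
    (Zop f ρ)^[n] (fdelta x) y ∈ Icc (0 : ℝ) 1 := by
  induction n generalizing y with
  | zero => by_cases h : y = x <;> simp [fdelta, h]
  | succ n ih =>
    rw [Function.iterate_succ_apply']
    exact Zop_mem_Icc hρ ih y

theorem greyLevel_le_iterate_Zop_fdelta [Finite I] (hρ : Admissible ρ) (x : X) (l : List I) :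
    greyLevel ρ l ≤ (Zop f ρ)^[l.length] (fdelta x) (word f l x) := by
  induction l with
  | nil => simp [fdelta]
  | cons i l ih =>
    set v := (Zop f ρ)^[l.length] (fdelta x)
    have hv := iterate_Zop_fdelta_mem_Icc (f := f) hρ l.length x
    rw [List.length_cons, Function.iterate_succ_apply', greyLevel_cons, word_cons]
    calc ρ i (greyLevel ρ l) ≤ ρ i (fuzzyImage (f i) v (f i (word f l x))) :=
          hρ.2.1 i (greyLevel_mem_Icc hρ l) (fuzzyImage_mem_Icc hv _)
            (ih.trans (le_fuzzyImage hv _))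
      _ ≤ Zop f ρ v (f i (word f l x)) :=
          le_ciSup (f := fun i => ρ i (fuzzyImage (f i) v _)) (Set.finite_range _).bddAbove i

/-- The suprema defining `Zop` are attained, since only finitely many grey levels occur. -/
theorem iterate_Zop_fdelta_eq_zero_or [Finite I] (hρ : Admissible ρ) (n : ℕ) (x y : X) :
    (Zop f ρ)^[n] (fdelta x) y = 0 ∨
      ∃ l : List I, l.length = n ∧ word f l x = y ∧
        (Zop f ρ)^[n] (fdelta x) y = greyLevel ρ l := by
  induction n generalizing y with
  | zero => by_cases h : y = x <;> simp [fdelta, h]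
  | succ n ih =>
    obtain ⟨j, -⟩ := hρ.2.2.2.2
    have : Nonempty I := ⟨j⟩
    set v := (Zop f ρ)^[n] (fdelta x)
    have hfin : (range v).Finite := by
      refine (((List.finite_length_eq I n).image (greyLevel ρ)).insert 0).subset ?_
      rintro _ ⟨z, rfl⟩
      rcases ih z with h | ⟨l, hl, -, h⟩
      · exact h ▸ mem_insert _ _
      · exact mem_insert_of_mem _ ⟨l, hl, h.symm⟩
    obtain ⟨i, hi⟩ := exists_eq_ciSup_of_finite (f := fun i => ρ i (fuzzyImage (f i) v y))
    have hZ : Zop f ρ v y = ρ i (fuzzyImage (f i) v y) := hi.symm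
    rw [Function.iterate_succ_apply', hZ]
    rcases fuzzyImage_eq_zero_or_exists (g := f i) hfin y with h | ⟨z, rfl, h⟩
    · exact Or.inl (by rw [h, hρ.1 i])
    rcases ih z with h' | ⟨l, hl, rfl, h'⟩
    · exact Or.inl (by rw [h, h', hρ.1 i])
    · exact Or.inr ⟨i :: l, by simp [hl], rfl, by rw [h, h', greyLevel_cons]⟩

theorem levelSet_iterate_Zop_fdelta [Finite I] (hρ : Admissible ρ) {α : ℝ} (hα : 0 < α)
    (n : ℕ) (x : X) :
    {y | α ≤ (Zop f ρ)^[n] (fdelta x) y} =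
      (word f · x) '' {l | l.length = n ∧ α ≤ greyLevel ρ l} := by
  ext y
  constructor
  · intro hy
    rcases iterate_Zop_fdelta_eq_zero_or (f := f) hρ n x y with h | ⟨l, hl, rfl, h⟩
    · exact absurd (h ▸ hy : α ≤ 0) (not_le.2 hα)
    · exact ⟨l, ⟨hl, h ▸ hy⟩, rfl⟩
  · rintro ⟨l, ⟨rfl, hl⟩, rfl⟩
    exact hl.trans (greyLevel_le_iterate_Zop_fdelta hρ x l)

end Iterates

section LevelSetDistance

variable {X : Type*} [MetricSpace X]

/-- The fuzzy sets on which `dInfty` is finite and satisfies the triangle inequality. -/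
def IsBoundedNormal (v : X → ℝ) : Prop :=
  (∃ z, 1 ≤ v z) ∧ Bornology.IsBounded {y | 0 < v y}

theorem IsBoundedNormal.nonempty {v : X → ℝ} (hv : IsBoundedNormal v) {α : ℝ}
    (hα : α ≤ 1) : {y | α ≤ v y}.Nonempty :=
  hv.1.imp fun _ h => hα.trans h

theorem IsBoundedNormal.isBounded {v : X → ℝ} (hv : IsBoundedNormal v) {α : ℝ}
    (hα : 0 < α) : Bornology.IsBounded {y | α ≤ v y} :=
  hv.2.subset fun _ h => hα.trans_le h

theorem isBoundedNormal_of_isFuzzyN {v : X → ℝ} (hv : IsFuzzyN v) : IsBoundedNormal v :=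
  ⟨hv.2.1.imp fun _ h => h.ge, hv.2.2.isBounded.subset subset_closure⟩

theorem hausdorffEDist_levelSet_ne_top {v w : X → ℝ} (hv : IsBoundedNormal v)
    (hw : IsBoundedNormal w) {α : ℝ} (hα : α ∈ Ioc (0 : ℝ) 1) :
    hausdorffEDist {y | α ≤ v y} {y | α ≤ w y} ≠ ⊤ :=
  hausdorffEDist_ne_top_of_nonempty_of_bounded (hv.nonempty hα.2) (hw.nonempty hα.2)
    (hv.isBounded hα.1) (hw.isBounded hα.1)

theorem hausdorffDist_le_dInfty {v w : X → ℝ} (hv : IsBoundedNormal v) (hw : IsBoundedNormal w)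
    {α : ℝ} (hα : α ∈ Ioc (0 : ℝ) 1) :
    hausdorffDist {y | α ≤ v y} {y | α ≤ w y} ≤ dInfty v w := by
  refine le_ciSup (f := fun α : Ioc (0 : ℝ) 1 => hausdorffDist {y | α ≤ v y} {y | α ≤ w y})
    ⟨diam ({y | 0 < v y} ∪ {y | 0 < w y}), ?_⟩ ⟨α, hα⟩
  rintro _ ⟨⟨β, hβ⟩, rfl⟩
  exact (hausdorffDist_le_diam (hv.nonempty hβ.2) (hv.isBounded hβ.1) (hw.nonempty hβ.2)
    (hw.isBounded hβ.1)).trans (diam_mono (union_subset_union (fun _ h => hβ.1.trans_le h)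
      (fun _ h => hβ.1.trans_le h)) (hv.2.union hw.2))

theorem dInfty_le_of_forall {v w : X → ℝ} {b : ℝ} (hb : 0 ≤ b)
    (h : ∀ α ∈ Ioc (0 : ℝ) 1, hausdorffDist {y | α ≤ v y} {y | α ≤ w y} ≤ b) :
    dInfty v w ≤ b :=
  Real.iSup_le (fun α => h α α.2) hb

theorem dInfty_nonneg (v w : X → ℝ) : 0 ≤ dInfty v w :=
  Real.iSup_nonneg fun _ => hausdorffDist_nonneg

theorem dInfty_comm (v w : X → ℝ) : dInfty v w = dInfty w v := by
  simp only [dInfty, hausdorffDist_comm]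

theorem dInfty_triangle {u v w : X → ℝ} (hu : IsBoundedNormal u) (hv : IsBoundedNormal v)
    (hw : IsBoundedNormal w) : dInfty u w ≤ dInfty u v + dInfty v w :=
  dInfty_le_of_forall (add_nonneg (dInfty_nonneg u v) (dInfty_nonneg v w)) fun _ hα =>
    (hausdorffDist_triangle (hausdorffEDist_levelSet_ne_top hu hv hα)).trans
      (add_le_add (hausdorffDist_le_dInfty hu hv hα) (hausdorffDist_le_dInfty hv hw hα))

theorem dInfty_triangle₃ {u v w z : X → ℝ} (hu : IsBoundedNormal u) (hv : IsBoundedNormal v)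
    (hw : IsBoundedNormal w) (hz : IsBoundedNormal z) :
    dInfty u z ≤ dInfty u v + dInfty v w + dInfty w z :=
  (dInfty_triangle hu hv hz).trans (by linarith [dInfty_triangle hv hw hz])

theorem le_of_tendsto_dInfty {ι : Type*} {l : Filter ι} [l.NeBot] {V : ι → X → ℝ}
    {v : X → ℝ} {y : ι → X} {z : X} {β : ℝ} (hV : ∀ k, IsBoundedNormal (V k))
    (hv : IsBoundedNormal v) (hvusc : UpperSemicontinuous v)
    (hVv : Tendsto (fun k => dInfty (V k) v) l (𝓝 0)) (hyz : Tendsto y l (𝓝 z))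
    (hβ : β ∈ Ioc (0 : ℝ) 1) (hle : ∀ᶠ k in l, β ≤ V k (y k)) : β ≤ v z := by
  set L := {x | β ≤ v x}
  have hbound : ∀ᶠ k in l, infDist z L ≤ dist z (y k) + dInfty (V k) v := by
    filter_upwards [hle] with k hk
    calc infDist z L ≤ infDist (y k) L + dist z (y k) := infDist_le_infDist_add_dist
      _ ≤ infDist (y k) {x | β ≤ V k x} + hausdorffDist {x | β ≤ V k x} L +
            dist z (y k) := by
          gcongr
          exact infDist_le_infDist_add_hausdorffDist (hausdorffEDist_levelSet_ne_top (hV k) hv hβ)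
      _ ≤ 0 + dInfty (V k) v + dist z (y k) := by
          rw [infDist_zero_of_mem (s := {x | β ≤ V k x}) hk]
          gcongr
          exact hausdorffDist_le_dInfty (hV k) hv hβ
      _ = dist z (y k) + dInfty (V k) v := by ring
  have hlim : Tendsto (fun k => dist z (y k) + dInfty (V k) v) l (𝓝 0) := by
    simpa using ((tendsto_const_nhds (x := z)).dist hyz).add hVv
  have hz : z ∈ closure L :=
    (mem_closure_iff_infDist_zero (hv.nonempty hβ.2)).2
      (le_antisymm (ge_of_tendsto hlim hbound) infDist_nonneg)
  exact (hvusc.isClosed_preimage β).closure_subset hz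

theorem isCompact_setOf_eq_one {u : X → ℝ} (hu : IsFuzzyStar u) : IsCompact {a | u a = 1} := by
  have hclosed : {a | u a = 1} = u ⁻¹' Ici 1 :=
    ext fun a => ⟨ge_of_eq, fun h => le_antisymm (hu.1.1 a).2 h⟩
  exact hu.1.2.2.of_isClosed_subset (hclosed ▸ hu.2.isClosed_preimage 1)
    fun a (ha : u a = 1) => subset_closure (show 0 < u a from ha ▸ one_pos)

theorem eq_of_dInfty_eq_zero {v w : X → ℝ} (hv : IsFuzzyStar v) (hw : IsFuzzyStar w)
    (h : dInfty v w = 0) : v = w := by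
  have key : ∀ {a b : X → ℝ}, IsFuzzyStar a → IsFuzzyStar b → dInfty a b = 0 →
      ∀ z, a z ≤ b z := by
    intro a b ha hb hab z
    refine le_of_forall_lt_imp_le_of_dense fun β hβ => ?_
    rcases le_or_gt β 0 with hβ0 | hβ0
    · exact hβ0.trans (hb.1.1 z).1
    exact le_of_tendsto_dInfty (l := (atTop : Filter ℕ)) (fun _ => isBoundedNormal_of_isFuzzyN ha.1)
      (isBoundedNormal_of_isFuzzyN hb.1) hb.2 (by simp [hab]) tendsto_const_nhds
      ⟨hβ0, hβ.le.trans (ha.1.1 z).2⟩ (Eventually.of_forall fun _ => hβ.le)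
  exact funext fun z => le_antisymm (key hv hw h z) (key hw hv (dInfty_comm w v ▸ h) z)

end LevelSetDistance

section Convergence

variable {X I : Type*} [MetricSpace X] [DecidableEq X] [Finite I] {f : I → X → X}
  {ρ : I → ℝ → ℝ} {C : ℝ}

variable (f ρ) in
/-- The fuzzy set `u_x` of the paper: the `dInfty`-limit of `Z^[n] (δ_x)`. -/
abbrev IsIterateLimit (x : X) (v : X → ℝ) : Prop :=
  Tendsto (fun n => dInfty ((Zop f ρ)^[n] (fdelta x)) v) atTop (𝓝 0)

theorem isBoundedNormal_iterate_Zop_fdelta (hρ : Admissible ρ) (n : ℕ) (x : X) :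
    IsBoundedNormal ((Zop f ρ)^[n] (fdelta x)) := by
  obtain ⟨j, hj⟩ := hρ.2.2.2.2
  refine ⟨⟨word f (List.replicate n j) x, ?_⟩,
    ((List.finite_length_eq I n).image (word f · x)).isBounded.subset fun y hy => ?_⟩
  · simpa [greyLevel_replicate hj] using greyLevel_le_iterate_Zop_fdelta hρ x (List.replicate n j)
  · rcases iterate_Zop_fdelta_eq_zero_or (f := f) hρ n x y with h | ⟨l, hl, rfl, -⟩
    · exact absurd h (ne_of_gt hy)
    · exact ⟨l, hl, rfl⟩

theorem dInfty_iterate_le_of_forall_dist_le (hρ : Admissible ρ) {n : ℕ} {x x' : X} {b : ℝ}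
    (hb : 0 ≤ b) (h : ∀ l : List I, l.length = n → dist (word f l x) (word f l x') ≤ b) :
    dInfty ((Zop f ρ)^[n] (fdelta x)) ((Zop f ρ)^[n] (fdelta x')) ≤ b := by
  refine dInfty_le_of_forall hb fun α hα => ?_
  rw [levelSet_iterate_Zop_fdelta hρ hα.1, levelSet_iterate_Zop_fdelta hρ hα.1]
  refine hausdorffDist_le_of_mem_dist hb ?_ ?_
  · rintro _ ⟨l, hl, rfl⟩
    exact ⟨_, ⟨l, hl, rfl⟩, h l hl.1⟩
  · rintro _ ⟨l, hl, rfl⟩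
    exact ⟨_, ⟨l, hl, rfl⟩, dist_comm (word f l x) _ ▸ h l hl.1⟩

/-- The Cauchy estimate for `n ↦ Z^[n] (δ_x)`: words of length `m ≥ n` are compared with
their prefixes of length `n`, and words of length `n` are padded with a letter `j` of grey
level one. -/
theorem dInfty_iterate_le_of_le (hρ : Admissible ρ) (horb : OrbitalContr f C) (hC0 : 0 ≤ C)
    (hC1 : C < 1) {x : X} {B : ℝ} (hB0 : 0 ≤ B) (hB : ∀ i, dist (f i x) x ≤ B) {n m : ℕ}
    (hnm : n ≤ m) :
    dInfty ((Zop f ρ)^[n] (fdelta x)) ((Zop f ρ)^[m] (fdelta x)) ≤ C ^ n * (B / (1 - C)) := by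
  obtain ⟨j, hj⟩ := hρ.2.2.2.2
  have hr : 0 ≤ C ^ n * (B / (1 - C)) :=
    mul_nonneg (pow_nonneg hC0 n) (div_nonneg hB0 (by linarith))
  have htake := dist_word_take_le horb hC0 hC1 hB0 hB
  refine dInfty_le_of_forall hr fun α hα => ?_
  rw [levelSet_iterate_Zop_fdelta hρ hα.1, levelSet_iterate_Zop_fdelta hρ hα.1]
  refine hausdorffDist_le_of_mem_dist hr ?_ ?_
  · rintro _ ⟨l, ⟨hl, hαl⟩, rfl⟩
    refine ⟨_, ⟨l ++ List.replicate (m - n) j, ⟨by simp [hl, hnm], ?_⟩, rfl⟩, ?_⟩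
    · rwa [greyLevel_append_of_eq_one l (greyLevel_replicate hj _)]
    · simpa [dist_comm, List.take_left' hl] using htake (l ++ List.replicate (m - n) j) n
  · rintro _ ⟨l, ⟨hl, hαl⟩, rfl⟩
    refine ⟨_, ⟨l.take n, ⟨List.length_take_of_le (hl ▸ hnm), ?_⟩, rfl⟩, htake l n⟩
    exact hαl.trans (by simpa using greyLevel_append_le hρ (l.take n) (l.drop n))

theorem dInfty_iterate_le_of_isIterateLimit (hρ : Admissible ρ) (horb : OrbitalContr f C)
    (hC0 : 0 ≤ C) (hC1 : C < 1) {x : X} {B : ℝ} (hB0 : 0 ≤ B) (hB : ∀ i, dist (f i x) x ≤ B)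
    {v : X → ℝ} (hv : IsBoundedNormal v) (hlim : IsIterateLimit f ρ x v) (n : ℕ) :
    dInfty ((Zop f ρ)^[n] (fdelta x)) v ≤ C ^ n * (B / (1 - C)) := by
  have hlim' := (tendsto_const_nhds (x := C ^ n * (B / (1 - C)))).add hlim
  rw [add_zero] at hlim'
  refine ge_of_tendsto hlim' ?_
  filter_upwards [eventually_ge_atTop n] with m hm
  exact (dInfty_triangle (isBoundedNormal_iterate_Zop_fdelta hρ n x)
    (isBoundedNormal_iterate_Zop_fdelta hρ m x) hv).trans
      (add_le_add_left (dInfty_iterate_le_of_le hρ horb hC0 hC1 hB0 hB hm) _)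

theorem eq_of_isIterateLimit_of_mem_orbitIFS (hρ : Admissible ρ) (horb : OrbitalContr f C)
    (hC0 : 0 ≤ C) (hC1 : C < 1) {t x y : X} (hx : x ∈ orbitIFS f t) (hy : y ∈ orbitIFS f t)
    {v w : X → ℝ} (hv : IsFuzzyStar v) (hw : IsFuzzyStar w)
    (hvlim : IsIterateLimit f ρ x v) (hwlim : IsIterateLimit f ρ y w) : v = w := by
  refine eq_of_dInfty_eq_zero hv hw (le_antisymm ?_ (dInfty_nonneg v w))
  have hlim : Tendsto (fun n => dInfty ((Zop f ρ)^[n] (fdelta x)) v + C ^ n * dist x y +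
      dInfty ((Zop f ρ)^[n] (fdelta y)) w) atTop (𝓝 0) := by
    simpa using (hvlim.add ((tendsto_pow_atTop_nhds_zero_of_lt_one hC0 hC1).mul_const _)).add
      hwlim
  refine ge_of_tendsto' hlim fun n => ?_
  have hxy : dInfty ((Zop f ρ)^[n] (fdelta x)) ((Zop f ρ)^[n] (fdelta y)) ≤ C ^ n * dist x y :=
    dInfty_iterate_le_of_forall_dist_le hρ (mul_nonneg (pow_nonneg hC0 n) dist_nonneg)
      fun l hl => hl ▸ dist_word_word_le horb hC0 hx hy l
  calc dInfty v w
      ≤ dInfty v ((Zop f ρ)^[n] (fdelta x)) +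
          dInfty ((Zop f ρ)^[n] (fdelta x)) ((Zop f ρ)^[n] (fdelta y)) +
          dInfty ((Zop f ρ)^[n] (fdelta y)) w :=
        dInfty_triangle₃ (isBoundedNormal_of_isFuzzyN hv.1)
          (isBoundedNormal_iterate_Zop_fdelta hρ n x)
          (isBoundedNormal_iterate_Zop_fdelta hρ n y) (isBoundedNormal_of_isFuzzyN hw.1)
    _ ≤ _ := by rw [dInfty_comm v]; gcongr

theorem pos_subset_closure_orbitIFS (hρ : Admissible ρ) {x : X} {v : X → ℝ}
    (hv : IsBoundedNormal v) (hv1 : ∀ y, v y ≤ 1) (hlim : IsIterateLimit f ρ x v) :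
    {y | 0 < v y} ⊆ closure (orbitIFS f x) := by
  intro y hy
  have hα : v y ∈ Ioc (0 : ℝ) 1 := ⟨hy, hv1 y⟩
  refine (mem_closure_iff_infDist_zero ⟨x, self_mem_orbitIFS f x⟩).2
    (le_antisymm (ge_of_tendsto' hlim fun n => ?_) infDist_nonneg)
  have hZ := isBoundedNormal_iterate_Zop_fdelta (f := f) hρ n x
  have hsub : {z | v y ≤ (Zop f ρ)^[n] (fdelta x) z} ⊆ orbitIFS f x := by
    rw [levelSet_iterate_Zop_fdelta hρ hα.1]
    rintro _ ⟨l, -, rfl⟩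
    exact word_mem_orbitIFS f l x
  calc infDist y (orbitIFS f x) ≤ infDist y {z | v y ≤ (Zop f ρ)^[n] (fdelta x) z} :=
        infDist_le_infDist_of_subset hsub (hZ.nonempty hα.2)
    _ ≤ hausdorffDist {z | v y ≤ v z} {z | v y ≤ (Zop f ρ)^[n] (fdelta x) z} :=
        infDist_le_hausdorffDist_of_mem (le_refl (v y)) (hausdorffEDist_levelSet_ne_top hv hZ hα)
    _ ≤ dInfty v ((Zop f ρ)^[n] (fdelta x)) := hausdorffDist_le_dInfty hv hZ hα
    _ = dInfty ((Zop f ρ)^[n] (fdelta x)) v := dInfty_comm _ _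

end Convergence

section Supremum

variable {X I : Type*} [MetricSpace X] [DecidableEq X] [Finite I] {f : I → X → X}
  {ρ : I → ℝ → ℝ} {C : ℝ}

theorem tendsto_dInfty_iterate_Zop_fdelta (hρ : Admissible ρ) (hf : ∀ i, Continuous (f i))
    (n : ℕ) (x : X) :
    Tendsto (fun x' => dInfty ((Zop f ρ)^[n] (fdelta x')) ((Zop f ρ)^[n] (fdelta x))) (𝓝 x)
      (𝓝 0) := by
  refine tendsto_order.2 ⟨fun b hb => Eventually.of_forall fun _ => hb.trans_le
    (dInfty_nonneg _ _), fun ε hε => ?_⟩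
  have hwords : ∀ᶠ x' in 𝓝 x, ∀ l ∈ {l : List I | l.length = n},
      dist (word f l x') (word f l x) < ε / 2 :=
    (eventually_all_finite (List.finite_length_eq I n)).2 fun l _ =>
      Metric.tendsto_nhds.1 ((continuous_word f hf l).tendsto x) _ (half_pos hε)
  filter_upwards [hwords] with x' hx'
  exact (dInfty_iterate_le_of_forall_dist_le hρ (half_pos hε).le
    fun l hl => (hx' l hl).le).trans_lt (half_lt_self hε)

theorem tendsto_dInfty_of_isIterateLimit (hρ : Admissible ρ) (hf : ∀ i, Continuous (f i))
    (horb : OrbitalContr f C) (hC0 : 0 ≤ C) (hC1 : C < 1) {K : Set X} (hK : IsCompact K)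
    {V : X → X → ℝ} (hV : ∀ a ∈ K, IsBoundedNormal (V a))
    (hlim : ∀ a ∈ K, IsIterateLimit f ρ a (V a)) {a : X} (ha : a ∈ K) :
    Tendsto (fun a' => dInfty (V a') (V a)) (𝓝[K] a) (𝓝 0) := by
  obtain ⟨B, hB0, hB⟩ := exists_dist_apply_le_of_isCompact hf hK
  have hest : ∀ a' ∈ K, ∀ n,
      dInfty ((Zop f ρ)^[n] (fdelta a')) (V a') ≤ C ^ n * (B / (1 - C)) :=
    fun a' ha' => dInfty_iterate_le_of_isIterateLimit hρ horb hC0 hC1 hB0 (hB · a' ha') (hV a' ha')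
      (hlim a' ha')
  refine tendsto_order.2 ⟨fun b hb => Eventually.of_forall fun _ => hb.trans_le
    (dInfty_nonneg _ _), fun ε hε => ?_⟩
  obtain ⟨n, hn⟩ := exists_pow_mul_lt hC0 hC1 (B / (1 - C)) (by positivity : 0 < ε / 3)
  filter_upwards [self_mem_nhdsWithin, nhdsWithin_le_nhds
    ((tendsto_dInfty_iterate_Zop_fdelta hρ hf n a).eventually (gt_mem_nhds (by positivity :
      0 < ε / 3)))] with a' ha' hclose
  calc dInfty (V a') (V a)
      ≤ dInfty (V a') ((Zop f ρ)^[n] (fdelta a')) +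
          dInfty ((Zop f ρ)^[n] (fdelta a')) ((Zop f ρ)^[n] (fdelta a)) +
          dInfty ((Zop f ρ)^[n] (fdelta a)) (V a) :=
        dInfty_triangle₃ (hV a' ha') (isBoundedNormal_iterate_Zop_fdelta hρ n a')
          (isBoundedNormal_iterate_Zop_fdelta hρ n a) (hV a ha)
    _ < ε / 3 + ε / 3 + ε / 3 := by
        rw [dInfty_comm (V a')]
        gcongr
        exacts [(hest a' ha' n).trans_lt hn, (hest a ha n).trans_lt hn]
    _ = ε := by ring

theorem exists_lt_of_nonneg_lt_iSup {ι : Type*} {g : ι → ℝ} {b : ℝ} (hb : 0 ≤ b)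
    (h : b < ⨆ i, g i) : ∃ i, b < g i := by
  cases isEmpty_or_nonempty ι
  · rw [Real.iSup_of_isEmpty] at h
    exact absurd hb (not_le.2 h)
  · exact exists_lt_of_lt_ciSup h

variable {K : Set X} {V : X → X → ℝ}

theorem isCompact_fsupp_iSup_of_isIterateLimit [CompleteSpace X] (hρ : Admissible ρ)
    (hf : ∀ i, Continuous (f i)) (horb : OrbitalContr f C) (hC0 : 0 ≤ C) (hC1 : C < 1)
    (hK : IsCompact K) (hV : ∀ a ∈ K, IsFuzzyStar (V a))
    (hlim : ∀ a ∈ K, IsIterateLimit f ρ a (V a)) :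
    IsCompact (fsupp fun y => ⨆ a : K, V a y) := by
  refine (isCompact_closure_biUnion_orbitIFS hf horb hC0 hC1 hK).of_isClosed_subset
    isClosed_closure (closure_minimal (fun y hy => ?_) isClosed_closure)
  obtain ⟨⟨a, ha⟩, hay⟩ :=
    exists_lt_of_nonneg_lt_iSup le_rfl (show 0 < ⨆ a : K, V a y from hy)
  exact closure_mono (subset_biUnion_of_mem ha) (pos_subset_closure_orbitIFS hρ
    (isBoundedNormal_of_isFuzzyN (hV a ha).1) (fun y => ((hV a ha).1.1 y).2) (hlim a ha) hay)

/-- Superlevel sets are sequentially closed: along a sequence `y k → y` with values at least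
`c`, choose `a k ∈ K` almost realising the supremum at `y k` and pass to a subsequence with
`a k → a ∈ K`; then `V (a k) → V a` and the level sets pass to the limit. -/
theorem upperSemicontinuous_iSup_of_isIterateLimit (hρ : Admissible ρ)
    (hf : ∀ i, Continuous (f i)) (horb : OrbitalContr f C) (hC0 : 0 ≤ C) (hC1 : C < 1)
    (hK : IsCompact K) (hV : ∀ a ∈ K, IsFuzzyStar (V a))
    (hlim : ∀ a ∈ K, IsIterateLimit f ρ a (V a)) :
    UpperSemicontinuous fun y => ⨆ a : K, V a y := by
  have hV01 : ∀ a ∈ K, ∀ y, V a y ∈ Icc (0 : ℝ) 1 := fun a ha => (hV a ha).1.1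
  have hbdd : ∀ y, BddAbove (range fun a : K => V a y) := fun y =>
    ⟨1, by rintro _ ⟨a, rfl⟩; exact (hV01 a a.2 y).2⟩
  refine upperSemicontinuous_iff_isClosed_preimage.2 fun c => ?_
  rcases le_or_gt c 0 with hc | hc
  · convert isClosed_univ
    exact eq_univ_of_forall fun y => hc.trans (Real.iSup_nonneg fun a => (hV01 a a.2 y).1)
  refine IsSeqClosed.isClosed fun {ys y} hys' hysy => ?_
  have hys : ∀ k, c ≤ ⨆ a : K, V a (ys k) := hys'
  obtain ⟨a₀, -⟩ := exists_lt_of_nonneg_lt_iSup le_rfl (hc.trans_le (hys 0))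
  have : Nonempty K := ⟨a₀⟩
  have hsub : ∀ k : ℕ, c - 1 / ((k : ℝ) + 1) < c := fun k => sub_lt_self c (by positivity)
  choose a ha using fun k => exists_lt_of_lt_ciSup ((hsub k).trans_le (hys k))
  obtain ⟨b, hbK, φ, hφ, haφ⟩ := hK.tendsto_subseq fun k => (a k).2
  have hVab : Tendsto (fun k => dInfty (V (a (φ k))) (V b)) atTop (𝓝 0) :=
    (tendsto_dInfty_of_isIterateLimit hρ hf horb hC0 hC1 hK (fun a ha =>
      isBoundedNormal_of_isFuzzyN (hV a ha).1) hlim hbK).comp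
      (tendsto_nhdsWithin_iff.2 ⟨haφ, Eventually.of_forall fun k => (a (φ k)).2⟩)
  have hc_lim : Tendsto (fun k => c - 1 / ((φ k : ℝ) + 1)) atTop (𝓝 c) := by
    simpa only [sub_zero, Function.comp_def] using (tendsto_const_nhds (x := c)).sub
      (tendsto_one_div_add_atTop_nhds_zero_nat.comp hφ.tendsto_atTop)
  suffices c ≤ V b y from this.trans (le_ciSup (hbdd y) ⟨b, hbK⟩)
  refine le_of_forall_lt_imp_le_of_dense fun β hβ => ?_
  rcases le_or_gt β 0 with hβ0 | hβ0
  · exact hβ0.trans (hV01 b hbK y).1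
  have hc1 : c ≤ 1 := (hys 0).trans (ciSup_le fun a => (hV01 a a.2 (ys 0)).2)
  have hlevel : ∀ᶠ k in atTop, β ≤ V (a (φ k)) (ys (φ k)) := by
    filter_upwards [hc_lim.eventually (lt_mem_nhds hβ)] with k hk
    exact hk.le.trans (ha (φ k)).le
  exact le_of_tendsto_dInfty (V := fun k => V (a (φ k)))
    (fun k => isBoundedNormal_of_isFuzzyN (hV _ (a (φ k)).2).1)
    (isBoundedNormal_of_isFuzzyN (hV b hbK).1) (hV b hbK).2 hVab (hysy.comp hφ.tendsto_atTop)
    ⟨hβ0, hβ.le.trans hc1⟩ hlevel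

theorem isFuzzyStar_iSup_of_isIterateLimit [CompleteSpace X] (hρ : Admissible ρ)
    (hf : ∀ i, Continuous (f i)) (horb : OrbitalContr f C) (hC0 : 0 ≤ C) (hC1 : C < 1)
    (hK : IsCompact K) (hKne : K.Nonempty) (hV : ∀ a ∈ K, IsFuzzyStar (V a))
    (hlim : ∀ a ∈ K, IsIterateLimit f ρ a (V a)) :
    IsFuzzyStar fun y => ⨆ a : K, V a y := by
  obtain ⟨a, ha⟩ := hKne
  have : Nonempty K := ⟨⟨a, ha⟩⟩
  have hV01 : ∀ a ∈ K, ∀ y, V a y ∈ Icc (0 : ℝ) 1 := fun a ha => (hV a ha).1.1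
  have hle1 : ∀ y, ⨆ a : K, V a y ≤ 1 := fun y => ciSup_le fun a => (hV01 a a.2 y).2
  obtain ⟨z, hz⟩ := (hV a ha).1.2.1
  have hge1 : 1 ≤ ⨆ b : K, V b z :=
    hz ▸ le_ciSup (f := fun b : K => V b z) ⟨1, by rintro _ ⟨b, rfl⟩; exact (hV01 b b.2 z).2⟩
      ⟨a, ha⟩
  exact ⟨⟨fun y => ⟨Real.iSup_nonneg fun a => (hV01 a a.2 y).1, hle1 y⟩,
    ⟨z, le_antisymm (hle1 z) hge1⟩,
    isCompact_fsupp_iSup_of_isIterateLimit hρ hf horb hC0 hC1 hK hV hlim⟩,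
    upperSemicontinuous_iSup_of_isIterateLimit hρ hf horb hC0 hC1 hK hV hlim⟩

end Supremum

end FuzzyIFS

open FuzzyIFS in
theorem stmt12_general {X I : Type*} [MetricSpace X] [CompleteSpace X] [DecidableEq X]
    [Finite I]
    (f : I → X → X) (hcont : ∀ i, Continuous (f i))
    (C : ℝ) (hC0 : 0 ≤ C) (hC1 : C < 1) (horb : OrbitalContr f C)
    (ρ : I → ℝ → ℝ) (hρ : Admissible ρ)
    (u : X → ℝ) (hu : InFS f u)
    (U : X → X → ℝ) (hUStar : ∀ x, 0 < u x → InFS f (U x))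
    (hU : ∀ x, 0 < u x →
      Tendsto (fun n => dInfty ((Zop f ρ)^[n] (fdelta x)) (U x)) atTop (nhds 0)) :
    UpperSemicontinuous (fun y => ⨆ x : {x // 0 < u x}, U x.1 y) ∧
    IsFuzzyStar (fun y => ⨆ x : {x // 0 < u x}, U x.1 y) := by
  obtain ⟨hustar, huorb⟩ := hu
  obtain ⟨x₁, hx₁⟩ := hustar.1.2.1
  set K := {a | u a = 1}
  have hpos : ∀ a ∈ K, 0 < u a := fun a (ha : u a = 1) => ha ▸ one_pos
  have hrange : ∀ y, range (fun x : {x // 0 < u x} => U x.1 y) = range fun a : K => U a y := by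
    intro y
    ext r
    constructor
    · rintro ⟨⟨x, hx⟩, rfl⟩
      obtain ⟨t, a, hxt, hat, ha⟩ := huorb x hx
      exact ⟨⟨a, ha⟩, congrFun (eq_of_isIterateLimit_of_mem_orbitIFS hρ horb hC0 hC1 hxt hat
        (hUStar x hx).1 (hUStar a (hpos a ha)).1 (hU x hx) (hU a (hpos a ha))).symm y⟩
    · rintro ⟨⟨a, ha⟩, rfl⟩
      exact ⟨⟨a, hpos a ha⟩, rfl⟩
  have hw : (fun y => ⨆ x : {x // 0 < u x}, U x.1 y) = fun y => ⨆ a : K, U a y :=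
    funext fun y => by rw [← sSup_range, ← sSup_range, hrange]
  have hstar := isFuzzyStar_iSup_of_isIterateLimit hρ hcont horb hC0 hC1
    (isCompact_setOf_eq_one hustar) ⟨x₁, hx₁⟩
    (fun a ha => (hUStar a (hpos a ha)).1) (fun a ha => hU a (hpos a ha))
  rw [hw]
  exact ⟨hstar.2, hstar⟩

/-- Proposition 3.7: `w_u = ∨_{x ∈ [u]^*} u_x` is upper semicontinuous,
normal and compactly supported, i.e. `w_u ∈ F*_X`. -/
theorem stmt12 {X I : Type*} [MetricSpace X] [CompleteSpace X] [DecidableEq X]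
    [Finite I] [Nonempty I]
    (f : I → X → X) (hcont : ∀ i, Continuous (f i))
    (C : ℝ) (hC0 : 0 ≤ C) (hC1 : C < 1) (horb : OrbitalContr f C)
    (ρ : I → ℝ → ℝ) (hρ : Admissible ρ)
    (u : X → ℝ) (hu : InFS f u)
    (U : X → X → ℝ) (hUStar : ∀ x, 0 < u x → InFS f (U x))
    (hU : ∀ x, 0 < u x →
      Tendsto (fun n => dInfty ((Zop f ρ)^[n] (fdelta x)) (U x)) atTop (nhds 0)) :
    UpperSemicontinuous (fun y => ⨆ x : {x // 0 < u x}, U x.1 y) ∧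
    IsFuzzyStar (fun y => ⨆ x : {x // 0 < u x}, U x.1 y) :=
  stmt12_general f hcont C hC0 hC1 horb ρ hρ u hu U hUStar hU
end

section
/- Let (X,d) be a complete metric space. Then the space F*_X of upper semicontinuous, normal, compactly supported fuzzy subsets of X, equipped with the metric d_∞(u,v) = sup_{α∈(0,1]} h([u]^α, [v]^α), is a complete metric space. -/
open Metric Filter Topology Set

/-! A `d_∞`-Cauchy sequence `s n` has level maps `α ↦ [s n]^α` that are uniformly Cauchy as maps
from `(0,1]` into the complete space of nonempty compact sets with the Hausdorff metric, so they
converge uniformly to an antitone family `K`; its union is totally bounded, being uniformly close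
to the compact support of a single `s n`. The fuzzy set `v x = sup {α | x ∈ K α}` has
`[v]^α = ⋂_{β<α} K β`, and `[u]^α = ⋂_{β<α} [u]^β` for every `u`. Passing to directed
intersections of compact sets does not increase the Hausdorff distance, hence
`d_∞(s n, v) ≤ sup_α h([s n]^α, K α) → 0`. -/

open TopologicalSpace Metric

instance : Nonempty (Ioc (0:ℝ) 1) := ⟨⟨1, zero_lt_one, le_rfl⟩⟩

instance (α : Ioc (0:ℝ) 1) : Nonempty {β : Ioc (0:ℝ) 1 // β < α} :=
  ⟨⟨⟨α / 2, half_pos α.2.1, (half_le_self α.2.1.le).trans α.2.2⟩, half_lt_self α.2.1⟩⟩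

theorem Metric.exists_mem_iInter_dist_le {X ι : Type*} [MetricSpace X] [Nonempty ι]
    {B : ι → Set X} (hB : Directed (· ⊇ ·) B) (hBc : ∀ i, IsCompact (B i)) {x : X} {ε : ℝ}
    (h : ∀ i, ∃ y ∈ B i, dist x y ≤ ε) : ∃ y ∈ ⋂ i, B i, dist x y ≤ ε := by
  have hdir : Directed (· ⊇ ·) fun i => B i ∩ closedBall x ε := fun i j =>
    (hB i j).imp fun _ hk => ⟨inter_subset_inter_left _ hk.1, inter_subset_inter_left _ hk.2⟩
  obtain ⟨y, hy⟩ := IsCompact.nonempty_iInter_of_directed_nonempty_isCompact_isClosed _ hdir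
    (fun i => (h i).imp fun y hy => ⟨hy.1, mem_closedBall'.2 hy.2⟩)
    (fun i => (hBc i).inter_right isClosed_closedBall)
    (fun i => (hBc i).isClosed.inter isClosed_closedBall)
  rw [← iInter_inter] at hy
  exact ⟨y, hy.1, mem_closedBall'.1 hy.2⟩

namespace TopologicalSpace.NonemptyCompacts

theorem le_of_tendsto {X ι : Type*} [EMetricSpace X] {l : Filter ι} [l.NeBot]
    {A B : ι → NonemptyCompacts X} {a b : NonemptyCompacts X} (hA : Tendsto A l (𝓝 a))
    (hB : Tendsto B l (𝓝 b)) (h : ∀ᶠ i in l, A i ≤ B i) : a ≤ b := by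
  have hsup : Tendsto (fun i => A i ⊔ B i) l (𝓝 (a ⊔ b)) :=
    (lipschitz_sup.continuous.tendsto (a, b)).comp (hA.prodMk_nhds hB)
  exact sup_eq_right.1 <| tendsto_nhds_unique_of_eventuallyEq hsup hB <|
    h.mono fun _ => sup_eq_right.2

variable {X : Type*} [MetricSpace X]

theorem exists_dist_le_of_mem {A B : NonemptyCompacts X} {x : X} (hx : x ∈ A) :
    ∃ y ∈ B, dist x y ≤ dist A B := by
  obtain ⟨y, hyB, hy⟩ := B.isCompact.exists_infDist_eq_dist B.nonempty x
  exact ⟨y, hyB, hy ▸ infDist_le_hausdorffDist_of_mem hx (edist_ne_top A B)⟩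

theorem hausdorffDist_iInter_le {ι : Type*} [Nonempty ι] {A B : ι → NonemptyCompacts X}
    (hA : Directed (· ≥ ·) A) (hB : Directed (· ≥ ·) B) {ε : ℝ} (hε : 0 ≤ ε)
    (h : ∀ i, dist (A i) (B i) ≤ ε) :
    hausdorffDist (⋂ i, (A i : Set X)) (⋂ i, (B i : Set X)) ≤ ε := by
  have approx : ∀ C D : ι → NonemptyCompacts X, Directed (· ≥ ·) D →
      (∀ i, dist (C i) (D i) ≤ ε) → ∀ x ∈ ⋂ i, (C i : Set X), ∃ y ∈ ⋂ i, (D i : Set X),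
        dist x y ≤ ε := fun C D hD hCD x hx =>
    exists_mem_iInter_dist_le hD (fun i => (D i).isCompact) fun i =>
      (exists_dist_le_of_mem (B := D i) (mem_iInter.1 hx i)).imp fun _ hy =>
        ⟨hy.1, hy.2.trans (hCD i)⟩
  exact hausdorffDist_le_of_mem_dist hε (approx A B hB h)
    (approx B A hA fun i => (dist_comm _ _).trans_le (h i))

end TopologicalSpace.NonemptyCompacts

theorem TendstoUniformly.totallyBounded_iUnion {X ι κ : Type*} [MetricSpace X] {l : Filter κ}
    [l.NeBot] {F : κ → ι → NonemptyCompacts X} {K : ι → NonemptyCompacts X}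
    (hF : TendstoUniformly F K l) (hFb : ∀ n, TotallyBounded (⋃ i, (F n i : Set X))) :
    TotallyBounded (⋃ i, (K i : Set X)) := by
  refine totallyBounded_iff.2 fun ε hε => ?_
  obtain ⟨n, hn⟩ := (Metric.tendstoUniformly_iff.1 hF (ε / 2) (half_pos hε)).exists
  obtain ⟨t, ht, hcover⟩ := totallyBounded_iff.1 (hFb n) (ε / 2) (half_pos hε)
  refine ⟨t, ht, iUnion_subset fun i x hx => ?_⟩
  obtain ⟨z, hz, hxz⟩ := exists_dist_lt_of_hausdorffDist_lt hx (hn i) (edist_ne_top (K i) (F n i))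
  obtain ⟨y, hy, hzy⟩ := mem_iUnion₂.1 (hcover (mem_iUnion.2 ⟨i, hz⟩))
  exact mem_iUnion₂.2 ⟨y, hy, mem_ball.2 (by linarith [dist_triangle x z y, mem_ball.1 hzy])⟩

section Levels

variable {X : Type*}

def fuzzyLevel (u : X → ℝ) (α : ℝ) : Set X := {x | α ≤ u x}

theorem fuzzyLevel_antitone (u : X → ℝ) : Antitone (fuzzyLevel u) :=
  fun _ _ h _ hx => h.trans hx

theorem fuzzyLevel_eq_iInter (u : X → ℝ) (α : Ioc (0:ℝ) 1) :
    fuzzyLevel u α = ⋂ β : {β : Ioc (0:ℝ) 1 // β < α}, fuzzyLevel u β := by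
  refine Subset.antisymm (subset_iInter fun β => fuzzyLevel_antitone u β.2.le) fun x hx => ?_
  change (α : ℝ) ≤ u x
  refine le_of_forall_lt_imp_le_of_dense fun c hc => ?_
  have hβ : max c (α / 2) ∈ Ioc (0:ℝ) 1 :=
    ⟨lt_max_of_lt_right (half_pos α.2.1), max_le (hc.le.trans α.2.2)
      ((half_le_self α.2.1.le).trans α.2.2)⟩
  exact (le_max_left _ _).trans
    (mem_iInter.1 hx ⟨⟨_, hβ⟩, max_lt hc (half_lt_self α.2.1)⟩)

theorem le_of_fuzzyLevel_subset {u v : X → ℝ} (hu : ∀ x, u x ≤ 1) (hv : ∀ x, 0 ≤ v x)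
    (h : ∀ α ∈ Ioc (0:ℝ) 1, fuzzyLevel u α ⊆ fuzzyLevel v α) : u ≤ v := by
  intro x
  rcases le_or_gt (u x) 0 with hx | hx
  · exact hx.trans (hv x)
  · exact h (u x) ⟨hx, hu x⟩ (show u x ≤ u x from le_rfl)

theorem upperSemicontinuous_of_isClosed_fuzzyLevel [TopologicalSpace X] {u : X → ℝ}
    (hu : ∀ x, u x ∈ Icc (0:ℝ) 1) (h : ∀ α ∈ Ioc (0:ℝ) 1, IsClosed (fuzzyLevel u α)) :
    UpperSemicontinuous u := by
  refine upperSemicontinuous_iff_isClosed_preimage.2 fun α => ?_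
  rcases le_or_gt α 0 with hα | hα
  · have : u ⁻¹' Ici α = univ := eq_univ_of_forall fun x => hα.trans (hu x).1
    exact this ▸ isClosed_univ
  rcases le_or_gt α 1 with hα1 | hα1
  · exact h α ⟨hα, hα1⟩
  · have : u ⁻¹' Ici α = ∅ :=
      eq_empty_of_forall_notMem fun x hx => hα1.not_ge ((mem_Ici.1 hx).trans (hu x).2)
    exact this ▸ isClosed_empty

end Levels

section LevelFamilies

variable {X : Type*} [TopologicalSpace X]

noncomputable def fuzzyOfLevels (K : Ioc (0:ℝ) 1 → NonemptyCompacts X) (x : X) : ℝ :=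
  ⨆ α : Ioc (0:ℝ) 1, (K α : Set X).indicator (fun _ => (α : ℝ)) x

variable {K : Ioc (0:ℝ) 1 → NonemptyCompacts X}

theorem fuzzyOfLevels_mem_Icc (x : X) : fuzzyOfLevels K x ∈ Icc (0:ℝ) 1 :=
  ⟨Real.iSup_nonneg fun α => indicator_nonneg (fun _ _ => α.2.1.le) x,
    ciSup_le fun α => indicator_apply_le' (fun _ => α.2.2) fun _ => zero_le_one⟩

theorem le_fuzzyOfLevels_of_mem {α : Ioc (0:ℝ) 1} {x : X} (hx : x ∈ K α) :
    (α : ℝ) ≤ fuzzyOfLevels K x := by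
  refine le_ciSup_of_le ⟨1, forall_mem_range.2 fun β => ?_⟩ α (by simp [indicator_of_mem hx])
  exact indicator_apply_le' (fun _ => β.2.2) fun _ => zero_le_one

theorem exists_mem_of_lt_fuzzyOfLevels {c : ℝ} (hc : 0 ≤ c) {x : X}
    (h : c < fuzzyOfLevels K x) : ∃ α : Ioc (0:ℝ) 1, c < α ∧ x ∈ K α := by
  obtain ⟨α, hα⟩ := exists_lt_of_lt_ciSup h
  by_cases hx : x ∈ (K α : Set X)
  · exact ⟨α, by simpa [indicator_of_mem hx] using hα, hx⟩
  · exact absurd hα (by simp [indicator_of_notMem hx, hc])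

theorem fuzzyLevel_fuzzyOfLevels (hK : Antitone K) (α : Ioc (0:ℝ) 1) :
    fuzzyLevel (fuzzyOfLevels K) α = ⋂ β : {β : Ioc (0:ℝ) 1 // β < α}, (K β : Set X) := by
  refine Subset.antisymm (fun x hx => mem_iInter.2 fun β => ?_) ?_
  · obtain ⟨γ, hβγ, hx⟩ :=
      exists_mem_of_lt_fuzzyOfLevels β.1.2.1.le ((Subtype.coe_lt_coe.2 β.2).trans_le hx)
    exact hK hβγ.le hx
  · rw [fuzzyLevel_eq_iInter]
    exact iInter_mono fun β x hx => le_fuzzyOfLevels_of_mem hx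

end LevelFamilies

section FuzzyStar

variable {X : Type*} [MetricSpace X] {u v w : X → ℝ}

theorem dInfty_comm (u v : X → ℝ) : dInfty u v = dInfty v u :=
  iSup_congr fun _ => hausdorffDist_comm

namespace IsFuzzyStar

theorem isCompact_fuzzyLevel (hu : IsFuzzyStar u) {α : ℝ} (hα : 0 < α) :
    IsCompact (fuzzyLevel u α) :=
  hu.1.2.2.of_isClosed_subset (hu.2.isClosed_preimage α) fun _ hx =>
    subset_closure (hα.trans_le hx)

theorem fuzzyLevel_nonempty (hu : IsFuzzyStar u) {α : ℝ} (hα : α ≤ 1) :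
    (fuzzyLevel u α).Nonempty :=
  hu.1.2.1.imp fun x (hx : u x = 1) => show α ≤ u x from hx ▸ hα

def levels (hu : IsFuzzyStar u) (α : Ioc (0:ℝ) 1) : NonemptyCompacts X :=
  ⟨⟨fuzzyLevel u α, hu.isCompact_fuzzyLevel α.2.1⟩, hu.fuzzyLevel_nonempty α.2.2⟩

theorem levels_antitone (hu : IsFuzzyStar u) : Antitone hu.levels :=
  fun _ _ h => fuzzyLevel_antitone u h

theorem levels_subset_fsupp (hu : IsFuzzyStar u) (α : Ioc (0:ℝ) 1) :
    (hu.levels α : Set X) ⊆ fsupp u :=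
  fun _ hx => subset_closure (α.2.1.trans_le hx)

theorem dist_levels_le_dInfty (hu : IsFuzzyStar u) (hv : IsFuzzyStar v) (α : Ioc (0:ℝ) 1) :
    dist (hu.levels α) (hv.levels α) ≤ dInfty u v := by
  refine le_ciSup (f := fun α => dist (hu.levels α) (hv.levels α))
    ⟨diam (fsupp u ∪ fsupp v), forall_mem_range.2 fun β => ?_⟩ α
  exact (hausdorffDist_le_diam (hu.levels β).nonempty (hu.levels β).isCompact.isBounded
    (hv.levels β).nonempty (hv.levels β).isCompact.isBounded).trans
    (diam_mono (union_subset_union (hu.levels_subset_fsupp β) (hv.levels_subset_fsupp β))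
      (hu.1.2.2.union hv.1.2.2).isBounded)

theorem dInfty_triangle (hu : IsFuzzyStar u) (hv : IsFuzzyStar v) (hw : IsFuzzyStar w) :
    dInfty u w ≤ dInfty u v + dInfty v w :=
  ciSup_le fun α => (dist_triangle (hu.levels α) (hv.levels α) (hw.levels α)).trans
    (add_le_add (hu.dist_levels_le_dInfty hv α) (hv.dist_levels_le_dInfty hw α))

theorem dInfty_eq_zero_iff (hu : IsFuzzyStar u) (hv : IsFuzzyStar v) :
    dInfty u v = 0 ↔ u = v := by
  refine ⟨fun h => ?_, fun h => h ▸ by simp [dInfty]⟩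
  have hlev : ∀ α : Ioc (0:ℝ) 1, fuzzyLevel u α = fuzzyLevel v α := fun α =>
    congrArg SetLike.coe (dist_le_zero.1 (h ▸ hu.dist_levels_le_dInfty hv α))
  exact le_antisymm
    (le_of_fuzzyLevel_subset (fun x => (hu.1.1 x).2) (fun x => (hv.1.1 x).1)
      fun α hα => (hlev ⟨α, hα⟩).le)
    (le_of_fuzzyLevel_subset (fun x => (hv.1.1 x).2) (fun x => (hu.1.1 x).1)
      fun α hα => (hlev ⟨α, hα⟩).ge)

theorem dInfty_fuzzyOfLevels_le (hu : IsFuzzyStar u) {K : Ioc (0:ℝ) 1 → NonemptyCompacts X}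
    (hK : Antitone K) {ε : ℝ} (hε : 0 ≤ ε) (h : ∀ α, dist (hu.levels α) (K α) ≤ ε) :
    dInfty u (fuzzyOfLevels K) ≤ ε := by
  refine ciSup_le fun α => ?_
  change hausdorffDist (fuzzyLevel u α) (fuzzyLevel (fuzzyOfLevels K) α) ≤ ε
  rw [fuzzyLevel_eq_iInter u α, fuzzyLevel_fuzzyOfLevels hK α]
  exact NonemptyCompacts.hausdorffDist_iInter_le
    (hu.levels_antitone.comp_monotone (Subtype.mono_coe _)).directed_ge
    (hK.comp_monotone (Subtype.mono_coe _)).directed_ge hε fun β => h β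

end IsFuzzyStar

theorem isFuzzyStar_fuzzyOfLevels {K : Ioc (0:ℝ) 1 → NonemptyCompacts X} (hK : Antitone K)
    (hc : IsCompact (closure (⋃ α, (K α : Set X)))) : IsFuzzyStar (fuzzyOfLevels K) := by
  refine ⟨⟨fuzzyOfLevels_mem_Icc, ?_, ?_⟩,
    upperSemicontinuous_of_isClosed_fuzzyLevel fuzzyOfLevels_mem_Icc fun α hα => ?_⟩
  · obtain ⟨x, hx⟩ := (K ⟨1, zero_lt_one, le_rfl⟩).nonempty
    exact ⟨x, le_antisymm (fuzzyOfLevels_mem_Icc x).2 (le_fuzzyOfLevels_of_mem hx)⟩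
  · refine hc.of_isClosed_subset isClosed_closure (closure_mono fun x hx => ?_)
    obtain ⟨α, -, hx⟩ := exists_mem_of_lt_fuzzyOfLevels le_rfl hx
    exact mem_iUnion.2 ⟨α, hx⟩
  · change IsClosed (fuzzyLevel (fuzzyOfLevels K) ((⟨α, hα⟩ : Ioc (0:ℝ) 1) : ℝ))
    rw [fuzzyLevel_fuzzyOfLevels hK]
    exact isClosed_iInter fun β => (K β).isCompact.isClosed

theorem exists_tendsto_dInfty_of_cauchy [CompleteSpace X] {s : ℕ → X → ℝ}
    (hs : ∀ n, IsFuzzyStar (s n))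
    (hc : ∀ ε > 0, ∃ N, ∀ m ≥ N, ∀ n ≥ N, dInfty (s m) (s n) < ε) :
    ∃ v, IsFuzzyStar v ∧ Tendsto (fun n => dInfty (s n) v) atTop (𝓝 0) := by
  set F : ℕ → Ioc (0:ℝ) 1 → NonemptyCompacts X := fun n => (hs n).levels
  have hF : UniformCauchySeqOn F atTop univ := Metric.uniformCauchySeqOn_iff.2 fun ε hε =>
    (hc ε hε).imp fun N hN m hm n hn α _ =>
      ((hs m).dist_levels_le_dInfty (hs n) α).trans_lt (hN m hm n hn)
  choose K hK using fun α => cauchySeq_tendsto_of_complete (hF.cauchySeq (mem_univ α))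
  have hFK : TendstoUniformly F K atTop :=
    tendstoUniformlyOn_univ.1 (hF.tendstoUniformlyOn_of_tendsto fun α _ => hK α)
  have hKanti : Antitone K := fun α β hαβ => NonemptyCompacts.le_of_tendsto (hK β) (hK α)
    (Eventually.of_forall fun n => (hs n).levels_antitone hαβ)
  have hKc : IsCompact (closure (⋃ α, (K α : Set X))) :=
    (hFK.totallyBounded_iUnion fun n => (hs n).1.2.2.totallyBounded.subset
      (iUnion_subset (hs n).levels_subset_fsupp)).closure.isCompact_of_isClosed isClosed_closure
  refine ⟨fuzzyOfLevels K, isFuzzyStar_fuzzyOfLevels hKanti hKc, tendsto_order.2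
    ⟨fun a ha => Eventually.of_forall fun n => ha.trans_le (Real.iSup_nonneg fun _ =>
      hausdorffDist_nonneg), fun a ha => ?_⟩⟩
  filter_upwards [Metric.tendstoUniformly_iff.1 hFK (a / 2) (half_pos ha)] with n hn
  exact ((hs n).dInfty_fuzzyOfLevels_le hKanti (half_pos ha).le
    fun α => (dist_comm _ _).trans_le (hn α).le).trans_lt (half_lt_self ha)

end FuzzyStar

/-- `(F*_X, d_∞)` is a complete metric space: `d_∞` is a metric on the
upper semicontinuous normal compactly supported fuzzy sets, and every Cauchy sequence
converges to an element of `F*_X`. -/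
theorem stmt17 {X : Type*} [MetricSpace X] [CompleteSpace X] :
    (∀ u v : X → ℝ, IsFuzzyStar u → IsFuzzyStar v → (dInfty u v = 0 ↔ u = v)) ∧
    (∀ u v : X → ℝ, IsFuzzyStar u → IsFuzzyStar v → dInfty u v = dInfty v u) ∧
    (∀ u v w : X → ℝ, IsFuzzyStar u → IsFuzzyStar v → IsFuzzyStar w →
      dInfty u w ≤ dInfty u v + dInfty v w) ∧
    (∀ s : ℕ → X → ℝ, (∀ n, IsFuzzyStar (s n)) →
      (∀ ε > 0, ∃ N, ∀ m ≥ N, ∀ n ≥ N, dInfty (s m) (s n) < ε) →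
      ∃ v : X → ℝ, IsFuzzyStar v ∧
        Tendsto (fun n => dInfty (s n) v) atTop (nhds 0)) :=
  ⟨fun _ _ hu hv => hu.dInfty_eq_zero_iff hv, fun u v _ _ => dInfty_comm u v,
    fun _ _ _ hu hv hw => hu.dInfty_triangle hv hw,
    fun _ hs hc => exists_tendsto_dInfty_of_cauchy hs hc⟩
end
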